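/- arXiv:0908.2834 — 13 statements merged into one kernel-verified Lean document; each statement's English description precedes it below -/
import Mathlib

section
/- The ReverseMatch algorithm is a 2-approximation for the Second-Price Matching problem: given a maximum matching f of the bipartite graph G, the second-price matching it constructs has value at least half the size of f, and hence at least half the value of an optimal second-price matching. -/
/-- A second-price matching assignment: each keyword is optionally assigned an
adjacent bidder, and each bidder is used at most once. -/
def IsPartialMatching {m : ℕ} {V : Type*} (adj : Fin m → V → Prop)
    (g : Fin m → Option V) : Prop :=
  (∀ u v, g u = some v → adj u v) ∧
  (∀ u u' v, g u = some v → g u' = some v → u = u')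

/-- Keyword `u` earns profit 1: it is matched to some bidder `v`, and at the moment
of its arrival some other neighbor `v'` of `u` is still unmatched. -/
def Profitable {m : ℕ} {V : Type*} (adj : Fin m → V → Prop)
    (g : Fin m → Option V) (u : Fin m) : Prop :=
  ∃ v v', g u = some v ∧ v' ≠ v ∧ adj u v' ∧ ∀ u' : Fin m, u' ≤ u → g u' ≠ some v'

-- The value of a second-price matching: the number of keywords matched for profit.
open scoped Classical in
noncomputable def spmValue {m : ℕ} {V : Type*} (adj : Fin m → V → Prop)
    (g : Fin m → Option V) : ℕ :=
  (Finset.univ.filter fun u : Fin m => Profitable adj g u).card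

-- The number of keywords matched by an assignment (its size as a plain matching).
open scoped Classical in
noncomputable def matchSize {m : ℕ} {V : Type*} (g : Fin m → Option V) : ℕ :=
  (Finset.univ.filter fun u : Fin m => (g u).isSome).card

/-!
Fix a second neighbour `w u ≠ f u` for every matched keyword `u`. If `w u` is taken by `f`
no later than `u`, it is taken by a unique earlier keyword, the *parent* of `u`. Scanning the
keywords from the last one backwards and dropping the parent of every keyword that is kept
leaves a set `K` containing no keyword together with its parent, and each dropped keyword is
charged to a distinct kept one, so `|f| ≤ 2|K|`. Restricted to `K`, the matching `f` earns
profit on every keyword of `K`: `w u` serves as its second-price bidder. Finally no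
second-price matching earns more than the size of a maximum matching.
-/

open Finset

theorem Finset.exists_parentFree_subset {α : Type*} [LinearOrder α] (P : α → α → Prop)
    (hlt : ∀ x y, P x y → y < x) (hunique : ∀ x y z, P x y → P x z → y = z)
    (M : Finset α) : ∃ K ⊆ M, (∀ x ∈ K, ∀ y ∈ K, ¬ P x y) ∧ #M ≤ 2 * #K := by
  classical
  induction M using Finset.strongInduction with
  | H M ih =>
    rcases M.eq_empty_or_nonempty with rfl | hM
    · exact ⟨∅, subset_rfl, by simp, by simp⟩
    set u := M.max' hM
    -- `y` is the parent of the maximum `u`, or `u` itself when it has none.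
    obtain ⟨y, hy⟩ : ∃ y, ∀ z, P u z → z = y := by
      by_cases h : ∃ y, P u y
      · obtain ⟨y, hy⟩ := h
        exact ⟨y, fun z hz => hunique u z y hz hy⟩
      · exact ⟨u, fun z hz => absurd ⟨z, hz⟩ h⟩
    set M' := (M.erase u).erase y
    have hM'M : M' ⊂ M :=
      ((M.erase u).erase_subset y).trans_ssubset (erase_ssubset (M.max'_mem hM))
    obtain ⟨K, hKM', hK, hcard⟩ := ih M' hM'M
    have hlt_u : ∀ x ∈ K, x < u := fun x hx =>
      lt_of_le_of_ne (M.le_max' x (hM'M.subset (hKM' hx)))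
        (ne_of_mem_erase (mem_of_mem_erase (hKM' hx)))
    have huK : u ∉ K := fun h => lt_irrefl u (hlt_u u h)
    refine ⟨insert u K, insert_subset (M.max'_mem hM) (hKM'.trans hM'M.subset), ?_, ?_⟩
    · simp only [mem_insert, forall_eq_or_imp]
      refine ⟨⟨fun h => lt_irrefl u (hlt u u h), fun z hz hP => ?_⟩,
        fun x hx => ⟨fun hP => lt_asymm (hlt_u x hx) (hlt x u hP), hK x hx⟩⟩
      exact (mem_erase.mp (hKM' hz)).1 (hy z hP)
    · have : #M ≤ #M' + 2 := by
        have h1 : #(M.erase u) - 1 ≤ #M' := pred_card_le_card_erase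
        have h2 : #(M.erase u) = #M - 1 := card_erase_of_mem (M.max'_mem hM)
        omega
      rw [card_insert_of_notMem huK]
      omega

section

variable {m : ℕ} {V : Type*} {adj : Fin m → V → Prop}

theorem IsPartialMatching.of_subset {f g : Fin m → Option V} (hf : IsPartialMatching adj f)
    (hgf : ∀ u v, g u = some v → f u = some v) : IsPartialMatching adj g :=
  ⟨fun u v h => hf.1 u v (hgf u v h), fun u u' v h h' => hf.2 u u' v (hgf u v h) (hgf u' v h')⟩

theorem spmValue_le_matchSize (g : Fin m → Option V) : spmValue adj g ≤ matchSize g := by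
  classical
  refine card_le_card fun u => ?_
  simp only [mem_filter, mem_univ, true_and]
  rintro ⟨v, -, hv, -⟩
  simp [hv]

theorem exists_adj_ne (hdeg : ∀ u : Fin m, ∃ v v' : V, v ≠ v' ∧ adj u v ∧ adj u v')
    (u : Fin m) (o : Option V) : ∃ v, adj u v ∧ o ≠ some v := by
  obtain ⟨v, v', hne, hv, hv'⟩ := hdeg u
  by_cases h : o = some v
  · exact ⟨v', hv', by simpa [h] using hne⟩
  · exact ⟨v, hv, h⟩

theorem exists_isPartialMatching_matchSize_le_two_mul_spmValue
    (hdeg : ∀ u : Fin m, ∃ v v' : V, v ≠ v' ∧ adj u v ∧ adj u v')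
    {f : Fin m → Option V} (hf : IsPartialMatching adj f) :
    ∃ g, IsPartialMatching adj g ∧ matchSize f ≤ 2 * spmValue adj g := by
  classical
  choose w hw_adj hw_ne using fun u => exists_adj_ne hdeg u (f u)
  let Parent (u u' : Fin m) : Prop := u' ≤ u ∧ f u' = some (w u)
  have hlt : ∀ u u', Parent u u' → u' < u := fun u u' ⟨hle, hu'⟩ =>
    lt_of_le_of_ne hle fun h => hw_ne u (h ▸ hu')
  have hunique : ∀ u u' u'', Parent u u' → Parent u u'' → u' = u'' :=
    fun _ _ _ h h' => hf.2 _ _ _ h.2 h'.2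
  obtain ⟨K, hKM, hK, hcard⟩ := exists_parentFree_subset Parent hlt hunique
    (univ.filter fun u => (f u).isSome)
  let g (u : Fin m) : Option V := if u ∈ K then f u else none
  have hg : ∀ u v, g u = some v → u ∈ K ∧ f u = some v := fun u v h => by
    by_cases hu : u ∈ K <;> simp_all [g]
  have hprofitable : ∀ u ∈ K, Profitable adj g u := by
    intro u hu
    obtain ⟨v, hv⟩ := Option.isSome_iff_exists.mp (mem_filter.mp (hKM hu)).2
    refine ⟨v, w u, by simp [g, hu, hv], fun h => hw_ne u (h ▸ hv), hw_adj u, ?_⟩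
    intro u' hle hu'
    obtain ⟨hu'K, hfu'⟩ := hg u' _ hu'
    exact hK u hu u' hu'K ⟨hle, hfu'⟩
  refine ⟨g, hf.of_subset fun u v h => (hg u v h).2, hcard.trans ?_⟩
  gcongr
  exact card_le_card fun u hu => mem_filter.mpr ⟨mem_univ u, hprofitable u hu⟩

end

/-- ReverseMatch is a 2-approximation for Second-Price Matching: from a
maximum matching `f` of `G` it constructs a second-price matching whose value is at
least half the size of `f`, hence at least half the optimal second-price matching value. -/
theorem reverseMatch_two_approx {m : ℕ} {V : Type*}
    (adj : Fin m → V → Prop)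
    (hdeg : ∀ u : Fin m, ∃ v v' : V, v ≠ v' ∧ adj u v ∧ adj u v')
    (f : Fin m → Option V)
    (hf : IsPartialMatching adj f)
    (hfmax : ∀ g, IsPartialMatching adj g → matchSize g ≤ matchSize f) :
    ∃ g, IsPartialMatching adj g ∧
      matchSize f ≤ 2 * spmValue adj g ∧
      ∀ g', IsPartialMatching adj g' → spmValue adj g' ≤ 2 * spmValue adj g := by
  obtain ⟨g, hg, hfg⟩ := exists_isPartialMatching_matchSize_le_two_mul_spmValue hdeg hf
  refine ⟨g, hg, hfg, fun g' hg' => ?_⟩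
  calc spmValue adj g' ≤ matchSize g' := spmValue_le_matchSize g'
    _ ≤ matchSize f := hfmax g' hg'
    _ ≤ 2 * spmValue adj g := hfg
end

section
/- For any m ≥ 1, there is an adversary strategy producing instances of online Second-Price Matching with m keywords against which every deterministic online algorithm achieves profit at most 1, while the optimal offline second-price matching has value m. Hence no deterministic online algorithm has competitive ratio better than m. -/
/-- Run a deterministic online algorithm `A` (which, for keyword `t`, sees only the
neighborhoods of keywords `0..t`) on the instance with neighborhoods `adj`, producing
the list of (feasibility-checked) decisions for the first `t` keywords. -/
def runList (A : (t : ℕ) → (Fin (t + 1) → Finset ℕ) → Option ℕ)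
    (adj : ℕ → Finset ℕ) : ℕ → List (Option ℕ)
  | 0 => []
  | t + 1 =>
    let prev := runList A adj t
    let d := A t fun s : Fin (t + 1) => adj s
    prev ++ [d.bind fun v => if v ∈ adj t ∧ some v ∉ prev then some v else none]

/-! The adversary offers keyword `t` the private pair `{2t, 2t+1}` until the algorithm first
matches some keyword `s`, to a bidder `v`; from then on keyword `t` is offered `{v, 2t+1}`.
Every later keyword can only be matched to its fresh bidder `2t+1`, and its one other
neighbour `v` is already taken, so keyword `s` is the only one that can earn profit. Offline,
`v` is never matched and serves as the free second neighbour of every keyword from `s` on,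
while each keyword before `s` leaves one bidder of its pair free. -/

section OnlineRun

variable (A : (t : ℕ) → (Fin (t + 1) → Finset ℕ) → Option ℕ) (adj : ℕ → Finset ℕ)

def onlineChoice (t : ℕ) : Option ℕ :=
  (A t fun s : Fin (t + 1) => adj s).bind
    fun v => if v ∈ adj t ∧ some v ∉ runList A adj t then some v else none

theorem runList_succ (t : ℕ) :
    runList A adj (t + 1) = runList A adj t ++ [onlineChoice A adj t] := by
  rw [runList]; rfl

theorem runList_eq_map_range (t : ℕ) :
    runList A adj t = (List.range t).map (onlineChoice A adj) := by
  induction t with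
  | zero => rfl
  | succ t ih => rw [runList_succ, ih, List.range_succ, List.map_append, List.map_singleton]

theorem runList_getD {s t : ℕ} (hs : s < t) :
    (runList A adj t).getD s none = onlineChoice A adj s := by
  simp [runList_eq_map_range, List.getD_eq_getElem?_getD, hs]

theorem onlineChoice_eq_some {t v : ℕ} (h : onlineChoice A adj t = some v) :
    v ∈ adj t ∧ ∀ s < t, onlineChoice A adj s ≠ some v := by
  rw [onlineChoice, runList_eq_map_range] at h
  simp only [Option.bind_eq_some_iff, Option.ite_none_right_eq_some, Option.some.injEq,
    List.mem_map, List.mem_range] at h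
  obtain ⟨_, _, ⟨hv, hfresh⟩, rfl⟩ := h
  exact ⟨hv, fun s hs hsv => hfresh ⟨s, hs, hsv⟩⟩

variable {A adj} {adj' : ℕ → Finset ℕ}

theorem runList_congr {t : ℕ} (h : ∀ s < t, adj s = adj' s) :
    runList A adj t = runList A adj' t := by
  induction t with
  | zero => rfl
  | succ t ih =>
    have hpre : (fun s : Fin (t + 1) => adj s) = fun s : Fin (t + 1) => adj' s :=
      funext fun s => h s s.isLt
    rw [runList, runList, hpre, h t t.lt_succ_self, ih fun s hs => h s (hs.trans t.lt_succ_self)]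

theorem onlineChoice_congr {t : ℕ} (h : ∀ s ≤ t, adj s = adj' s) :
    onlineChoice A adj t = onlineChoice A adj' t := by
  have hpre : (fun s : Fin (t + 1) => adj s) = fun s : Fin (t + 1) => adj' s :=
    funext fun s => h s (Nat.le_of_lt_succ s.isLt)
  rw [onlineChoice, onlineChoice, hpre, h t le_rfl, runList_congr fun s hs => h s hs.le]

theorem isPartialMatching_runList (m : ℕ) :
    IsPartialMatching (fun (u : Fin m) (v : ℕ) => v ∈ adj u)
      (fun u : Fin m => (runList A adj m).getD u none) := by
  simp only [runList_getD A adj (Fin.isLt _)]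
  refine ⟨fun _ _ h => (onlineChoice_eq_some A adj h).1, fun u u' _ h h' => ?_⟩
  rcases lt_trichotomy u u' with hlt | heq | hgt
  · exact absurd h ((onlineChoice_eq_some A adj h').2 u hlt)
  · exact heq
  · exact absurd h' ((onlineChoice_eq_some A adj h).2 u' hgt)

end OnlineRun

section Matchings

variable {m : ℕ} {V : Type*} {adj : Fin m → V → Prop}

theorem not_profitable_of_adj_subset {g : Fin m → Option V} (hg : IsPartialMatching adj g)
    {s u : Fin m} (hsu : s < u) {v y : V} (hs : g s = some v)
    (hadj : ∀ x, adj u x → x = v ∨ x = y) : ¬ Profitable adj g u := by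
  rintro ⟨x, x', hx, hx'x, hx', hfree⟩
  have hxv : x ≠ v := fun hxv => hsu.ne (hg.2 s u v hs (hxv ▸ hx))
  have hxy : x = y := (hadj x (hg.1 u x hx)).resolve_left hxv
  have hx'v : x' = v := (hadj x' hx').resolve_right (hxy ▸ hx'x)
  exact hfree s hsu.le (hx'v ▸ hs)

theorem isPartialMatching_some_comp {f : Fin m → V} (hf : Function.Injective f)
    (hadj : ∀ u, adj u (f u)) : IsPartialMatching adj (some ∘ f) :=
  ⟨fun u _ h => Option.some_injective _ h ▸ hadj u,
    fun _ _ _ h h' => hf (Option.some_injective _ (h.trans h'.symm))⟩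

theorem spmValue_some_comp {f : Fin m → V}
    (hspare : ∀ u, ∃ v, adj u v ∧ v ∉ Set.range f) : spmValue adj (some ∘ f) = m := by
  classical
  have hprof : ∀ u, Profitable adj (some ∘ f) u := fun u => by
    obtain ⟨v, hv, hvf⟩ := hspare u
    exact ⟨f u, v, rfl, fun h => hvf ⟨u, h.symm⟩, hv,
      fun u' _ h => hvf ⟨u', Option.some_injective _ h⟩⟩
  rw [spmValue, Finset.filter_true_of_mem fun u _ => hprof u, Finset.card_univ,
    Fintype.card_fin]

end Matchings

section Adversary

def pairAdj (t : ℕ) : Finset ℕ := {2 * t, 2 * t + 1}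

def adversaryAdj (s v t : ℕ) : Finset ℕ := if t ≤ s then pairAdj t else {v, 2 * t + 1}

theorem card_adversaryAdj {s v : ℕ} (hv : v ∈ pairAdj s) (t : ℕ) :
    (adversaryAdj s v t).card = 2 := by
  simp only [pairAdj, Finset.mem_insert, Finset.mem_singleton] at hv
  unfold adversaryAdj pairAdj
  split_ifs with ht
  · exact Finset.card_pair (by omega)
  · exact Finset.card_pair (by omega)

/-- `s` is the first keyword the algorithm matches on the pair instance, or `s = m` if it
matches none of the first `m`. -/
theorem exists_first_onlineChoice_pairAdj
    (A : (t : ℕ) → (Fin (t + 1) → Finset ℕ) → Option ℕ) (m : ℕ) :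
    ∃ s v, v ∈ pairAdj s ∧ (∀ t < s, onlineChoice A pairAdj t = none) ∧
      (s < m → onlineChoice A pairAdj s = some v) := by
  induction m with
  | zero => exact ⟨0, 0, by simp [pairAdj], fun t ht => absurd ht t.not_lt_zero, by simp⟩
  | succ m ih =>
    obtain ⟨s, v, hv, hnone, hsome⟩ := ih
    by_cases hsm : s < m
    · exact ⟨s, v, hv, hnone, fun _ => hsome hsm⟩
    cases hm : onlineChoice A pairAdj m with
    | none =>
      refine ⟨m + 1, 2 * (m + 1), by simp [pairAdj], fun t ht => ?_, by simp⟩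
      rcases Nat.lt_succ_iff_lt_or_eq.1 ht with ht | rfl
      · exact hnone t (ht.trans_le (not_lt.1 hsm))
      · exact hm
    | some w =>
      exact ⟨m, w, (onlineChoice_eq_some A pairAdj hm).1,
        fun t ht => hnone t (ht.trans_le (not_lt.1 hsm)), fun _ => hm⟩

theorem exists_first_onlineChoice (A : (t : ℕ) → (Fin (t + 1) → Finset ℕ) → Option ℕ)
    (m : ℕ) : ∃ s v, v ∈ pairAdj s ∧ (∀ t < s, onlineChoice A (adversaryAdj s v) t = none) ∧
      (s < m → onlineChoice A (adversaryAdj s v) s = some v) := by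
  obtain ⟨s, v, hv, hnone, hsome⟩ := exists_first_onlineChoice_pairAdj A m
  have hagree : ∀ t ≤ s, onlineChoice A (adversaryAdj s v) t = onlineChoice A pairAdj t :=
    fun t ht => onlineChoice_congr fun r hr => if_pos (hr.trans ht)
  exact ⟨s, v, hv, fun t ht => (hagree t ht.le).trans (hnone t ht),
    fun hs => (hagree s le_rfl).trans (hsome hs)⟩

variable {A : (t : ℕ) → (Fin (t + 1) → Finset ℕ) → Option ℕ} {m s v : ℕ}

theorem spmValue_runList_adversaryAdj_le_one
    (hnone : ∀ t < s, onlineChoice A (adversaryAdj s v) t = none)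
    (hsome : s < m → onlineChoice A (adversaryAdj s v) s = some v) :
    spmValue (fun (u : Fin m) (x : ℕ) => x ∈ adversaryAdj s v u)
      (fun t : Fin m => (runList A (adversaryAdj s v) m).getD t.val none) ≤ 1 := by
  classical
  have hprof : ∀ u : Fin m, Profitable (fun (u : Fin m) (x : ℕ) => x ∈ adversaryAdj s v u)
      (fun t : Fin m => (runList A (adversaryAdj s v) m).getD t.val none) u → u.val = s := by
    intro u hu
    rcases lt_trichotomy u.val s with hus | hus | hsu
    · obtain ⟨x, -, hx, -⟩ := hu
      change (runList A (adversaryAdj s v) m).getD u none = some x at hx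
      rw [runList_getD _ _ u.isLt, hnone u hus] at hx
      exact absurd hx (Option.some_ne_none x).symm
    · exact hus
    · have hsm : s < m := hsu.trans u.isLt
      refine absurd hu (not_profitable_of_adj_subset
        (isPartialMatching_runList m) (s := ⟨s, hsm⟩) hsu (v := v) (y := 2 * u.val + 1)
        ((runList_getD _ _ hsm).trans (hsome hsm)) fun y hy => ?_)
      simpa [adversaryAdj, hsu.not_ge] using hy
  refine Finset.card_le_one.2 fun a ha b hb => Fin.ext ?_
  rw [Finset.mem_filter] at ha hb
  exact (hprof a ha.2).trans (hprof b hb.2).symm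

/-- Offline, keyword `s` takes the partner of `v` in its pair and every other keyword `t` takes
`2 * t + 1`. -/
theorem exists_spmValue_adversaryAdj_eq (hv : v ∈ pairAdj s) :
    ∃ g, IsPartialMatching (fun (u : Fin m) (x : ℕ) => x ∈ adversaryAdj s v u) g ∧
      spmValue (fun (u : Fin m) (x : ℕ) => x ∈ adversaryAdj s v u) g = m := by
  simp only [pairAdj, Finset.mem_insert, Finset.mem_singleton] at hv
  let w := if v = 2 * s then 2 * s + 1 else 2 * s
  have hw : w / 2 = s ∧ w ≠ v := by dsimp only [w]; split_ifs <;> omega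
  let f : Fin m → ℕ := fun t => if t.val = s then w else 2 * t.val + 1
  have hf : Function.Injective f := fun a b hab => by
    apply Fin.ext; dsimp only [f] at hab; split_ifs at hab <;> omega
  have hadj : ∀ t : Fin m, f t ∈ adversaryAdj s v t := fun t => by
    dsimp only [f, w, adversaryAdj, pairAdj]; split_ifs <;> simp_all
  have hspare : ∀ t : Fin m, ∃ x, x ∈ adversaryAdj s v t ∧ x ∉ Set.range f := fun t => by
    refine ⟨if t.val < s then 2 * t.val else v, ?_, ?_⟩
    · dsimp only [adversaryAdj, pairAdj]; split_ifs <;> simp_all <;> omega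
    · rintro ⟨u, hu⟩; dsimp only [f] at hu; split_ifs at hu <;> omega
  exact ⟨some ∘ f, isPartialMatching_some_comp hf hadj, spmValue_some_comp hspare⟩

end Adversary

theorem online_deterministic_lower_bound_general (m : ℕ)
    (A : (t : ℕ) → (Fin (t + 1) → Finset ℕ) → Option ℕ) :
    ∃ adj : ℕ → Finset ℕ,
      (∀ t : Fin m, 2 ≤ (adj t).card) ∧
      spmValue (fun (u : Fin m) (v : ℕ) => v ∈ adj u)
        (fun t : Fin m => (runList A adj m).getD t.val none) ≤ 1 ∧
      ∃ g, IsPartialMatching (fun (u : Fin m) (v : ℕ) => v ∈ adj u) g ∧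
        spmValue (fun (u : Fin m) (v : ℕ) => v ∈ adj u) g = m := by
  obtain ⟨s, v, hv, hnone, hsome⟩ := exists_first_onlineChoice A m
  exact ⟨adversaryAdj s v, fun t => (card_adversaryAdj hv t).ge,
    spmValue_runList_adversaryAdj_le_one hnone hsome, exists_spmValue_adversaryAdj_eq hv⟩

/-- for any `m ≥ 1` there is an adversary instance of online Second-Price
Matching with `m` keywords on which any given deterministic online algorithm earns
profit at most `1`, while the optimal offline second-price matching has value `m`. -/
theorem online_deterministic_lower_bound (m : ℕ) (hm : 1 ≤ m)
    (A : (t : ℕ) → (Fin (t + 1) → Finset ℕ) → Option ℕ) :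
    ∃ adj : ℕ → Finset ℕ,
      (∀ t : Fin m, 2 ≤ (adj t).card) ∧
      spmValue (fun (u : Fin m) (v : ℕ) => v ∈ adj u)
        (fun t : Fin m => (runList A adj m).getD t.val none) ≤ 1 ∧
      ∃ g, IsPartialMatching (fun (u : Fin m) (v : ℕ) => v ∈ adj u) g ∧
        spmValue (fun (u : Fin m) (v : ℕ) => v ∈ adj u) g = m :=
  online_deterministic_lower_bound_general m A
end

section
/- Define sequences X_m, Y_m with X_1 ≤ 1, Y_1 ≤ 0, and satisfying X_m ≤ max{X_{m-1}, (X_{m-1}+Y_{m-1})/2 + 1} and Y_m ≤ max{Y_{m-1}, (X_{m-1}+Y_{m-1})/2} for m ≥ 2. Then X_m ≤ (m+1)/2 and Y_m ≤ (m−1)/2 for all m ≥ 1. -/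
/-! Induction on `m` with both bounds together: if `X m ≤ c + 1` and `Y m ≤ c` (with
`c = (m - 1) / 2`), each branch of either maximum rises by at most `1/2`. -/

lemma max_average_step_le {x y x' y' c : ℝ} (hx : x ≤ c + 1) (hy : y ≤ c)
    (hx' : x' ≤ max x ((x + y) / 2 + 1)) (hy' : y' ≤ max y ((x + y) / 2)) :
    x' ≤ c + 3 / 2 ∧ y' ≤ c + 1 / 2 := by
  have havg : (x + y) / 2 ≤ c + 1 / 2 := by linarith
  constructor
  · exact hx'.trans (max_le (by linarith) (by linarith))
  · exact hy'.trans (max_le (by linarith) havg)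

/-- sequences with `X 1 ≤ 1`, `Y 1 ≤ 0` and
`X m ≤ max (X (m-1)) ((X (m-1) + Y (m-1))/2 + 1)`,
`Y m ≤ max (Y (m-1)) ((X (m-1) + Y (m-1))/2)` for `m ≥ 2`
satisfy `X m ≤ (m+1)/2` and `Y m ≤ (m−1)/2` for all `m ≥ 1`. -/
theorem optimal_online_upper_bound (X Y : ℕ → ℝ)
    (hX1 : X 1 ≤ 1) (hY1 : Y 1 ≤ 0)
    (hX : ∀ m : ℕ, 1 ≤ m → X (m + 1) ≤ max (X m) ((X m + Y m) / 2 + 1))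
    (hY : ∀ m : ℕ, 1 ≤ m → Y (m + 1) ≤ max (Y m) ((X m + Y m) / 2)) :
    ∀ m : ℕ, 1 ≤ m → X m ≤ ((m : ℝ) + 1) / 2 ∧ Y m ≤ ((m : ℝ) - 1) / 2 := by
  intro m hm
  induction m, hm using Nat.le_induction with
  | base => norm_num [hX1, hY1]
  | succ m hm ih =>
    obtain ⟨hXm, hYm⟩ := ih
    have step := max_average_step_le (c := ((m : ℝ) - 1) / 2) (by linarith) hYm
      (hX m hm) (hY m hm)
    push_cast
    constructor <;> linarith [step.1, step.2]
end

section
/- For the random distribution of instances in which the optimal offline second-price matching has value m while every online algorithm has expected profit at most (m+1)/2, Yao's principle implies that every randomized online algorithm for Second-Price Matching has competitive ratio at least 2m/(m+1), hence at least 2 asymptotically. -/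
/-!
Averaging the competitiveness inequality `m ≤ ρ · E_q[perf d i]` over the hard input
distribution `p` and exchanging the two expectations gives `m ≤ ρ · E_q[E_p[perf d i]]`.
Each deterministic algorithm earns at most `(m + 1) / 2` against `p`, so
`m ≤ ρ · (m + 1) / 2`.
-/

open Finset

section Averaging

variable {ι : Type*} [Fintype ι] {p f : ι → ℝ} {c : ℝ}

lemma le_sum_mul_of_forall_le (hp0 : ∀ i, 0 ≤ p i) (hp1 : ∑ i, p i = 1)
    (h : ∀ i, c ≤ f i) : c ≤ ∑ i, p i * f i :=
  calc c = ∑ i, p i * c := by rw [← sum_mul, hp1, one_mul]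
    _ ≤ ∑ i, p i * f i := sum_le_sum fun i _ => mul_le_mul_of_nonneg_left (h i) (hp0 i)

lemma sum_mul_le_of_forall_le (hp0 : ∀ i, 0 ≤ p i) (hp1 : ∑ i, p i = 1)
    (h : ∀ i, f i ≤ c) : ∑ i, p i * f i ≤ c :=
  calc ∑ i, p i * f i ≤ ∑ i, p i * c :=
        sum_le_sum fun i _ => mul_le_mul_of_nonneg_left (h i) (hp0 i)
    _ = c := by rw [← sum_mul, hp1, one_mul]

end Averaging

section Yao

variable {ι α : Type*} [Fintype ι] [Fintype α] (perf : α → ι → ℝ) (p : ι → ℝ) (q : α → ℝ)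

lemma sum_mul_sum_mul_comm :
    ∑ i, p i * ∑ d, q d * perf d i = ∑ d, q d * ∑ i, p i * perf d i := by
  simp only [mul_sum]
  rw [sum_comm]
  exact sum_congr rfl fun d _ => sum_congr rfl fun i _ => mul_left_comm _ _ _

variable {perf p q}

/-- Yao's principle: against a fixed input distribution, a randomized algorithm does no
better in expectation than the best deterministic one. -/
lemma sum_mul_sum_mul_le_of_forall_le {B : ℝ} (hq0 : ∀ d, 0 ≤ q d) (hq1 : ∑ d, q d = 1)
    (h : ∀ d, ∑ i, p i * perf d i ≤ B) : ∑ i, p i * ∑ d, q d * perf d i ≤ B := by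
  rw [sum_mul_sum_mul_comm]
  exact sum_mul_le_of_forall_le hq0 hq1 h

lemma le_mul_sum_mul_sum_mul_of_competitive {c ρ : ℝ} (hp0 : ∀ i, 0 ≤ p i)
    (hp1 : ∑ i, p i = 1) (hρ : ∀ i, c ≤ ρ * ∑ d, q d * perf d i) :
    c ≤ ρ * ∑ i, p i * ∑ d, q d * perf d i :=
  calc c ≤ ∑ i, p i * (ρ * ∑ d, q d * perf d i) := le_sum_mul_of_forall_le hp0 hp1 hρ
    _ = ρ * ∑ i, p i * ∑ d, q d * perf d i := by
      rw [mul_sum]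
      exact sum_congr rfl fun i _ => mul_left_comm _ _ _

end Yao

lemma div_le_of_le_mul_of_le {c t B ρ : ℝ} (hc : 0 < c) (ht : 0 ≤ t) (htB : t ≤ B)
    (h : c ≤ ρ * t) : c / B ≤ ρ := by
  have hρ : 0 < ρ := pos_of_mul_pos_left (hc.trans_le h) ht
  have hB : 0 < B := (pos_of_mul_pos_right (hc.trans_le h) hρ.le).trans_le htB
  rw [div_le_iff₀ hB]
  exact h.trans (mul_le_mul_of_nonneg_left htB hρ.le)

/-- Yao's principle for the 2PM lower bound: if there is a distribution
`p` over instances on which the offline optimum is `m` while every deterministic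
algorithm has expected performance at most `(m+1)/2`, then any randomized algorithm
(a distribution `q` over deterministic algorithms) that is `ρ`-competitive — i.e. on
every instance the optimum `m` is at most `ρ` times its expected performance — has
`ρ ≥ 2m/(m+1)`, hence asymptotically at least `2`. -/
theorem yao_randomized_lower_bound {NI NA : ℕ} (m : ℕ) (hm : 1 ≤ m)
    (perf : Fin NA → Fin NI → ℝ) (hperf : ∀ d i, 0 ≤ perf d i)
    (p : Fin NI → ℝ) (hp0 : ∀ i, 0 ≤ p i) (hp1 : ∑ i, p i = 1)
    (hdist : ∀ d : Fin NA, ∑ i, p i * perf d i ≤ ((m : ℝ) + 1) / 2)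
    (q : Fin NA → ℝ) (hq0 : ∀ d, 0 ≤ q d) (hq1 : ∑ d, q d = 1)
    (ρ : ℝ) (hρ : ∀ i : Fin NI, (m : ℝ) ≤ ρ * ∑ d, q d * perf d i) :
    2 * (m : ℝ) / ((m : ℝ) + 1) ≤ ρ := by
  have hm_pos : (0 : ℝ) < m := by exact_mod_cast hm
  have hvalue_nonneg : 0 ≤ ∑ i, p i * ∑ d, q d * perf d i :=
    sum_nonneg fun i _ => mul_nonneg (hp0 i) <|
      sum_nonneg fun d _ => mul_nonneg (hq0 d) (hperf d i)
  have hlower := le_mul_sum_mul_sum_mul_of_competitive hp0 hp1 hρ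
  have hupper := sum_mul_sum_mul_le_of_forall_le hq0 hq1 hdist
  calc 2 * (m : ℝ) / ((m : ℝ) + 1) = m / (((m : ℝ) + 1) / 2) := by field_simp
    _ ≤ ρ := div_le_of_le_mul_of_le hm_pos hvalue_nonneg hupper hlower
end

section
/- For online bipartite matching, the matching produced by Ranking with keyword arrival order π and bidder ranking σ equals the matching produced by the dual process Ranking' in which bidders arrive in order σ and each arriving bidder is matched to the available keyword minimizing π. -/
/-!
Scanning the bidders in `σ`-order turns the `σ`-minimal free neighbour into the first free
neighbour in a list, so both processes are one list-greedy procedure run from the two sides.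
It is symmetric by induction on the keywords: the first keyword `u` takes its first neighbour
`v₀`. In the dual process the bidders before `v₀` are not adjacent to `u`, and `u`, having the
highest priority, is the first free neighbour of `v₀` when it arrives; deleting `u` and `v₀`
leaves the same instance on both sides.
-/

/-- One pass of the Ranking algorithm: process the keywords in the given arrival list,
matching each arriving keyword to its unmatched neighbor `v` minimizing `σ v` (bidders
are elements of `Fin p`, and `σ.symm r` is the bidder of rank `r`). -/
def rankingAux {α : Type*} {p : ℕ} (E : α → Fin p → Bool) (σ : Equiv.Perm (Fin p)) :
    List α → Finset (Fin p) → List (α × Fin p)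
  | [], _ => []
  | u :: rest, matched =>
    let cand : Finset (Fin p) :=
      Finset.univ.filter fun r => E u (σ.symm r) = true ∧ σ.symm r ∉ matched
    if h : cand.Nonempty then
      (u, σ.symm (cand.min' h)) ::
        rankingAux E σ rest (insert (σ.symm (cand.min' h)) matched)
    else rankingAux E σ rest matched

/-- The matching produced by Ranking on the bipartite graph `E` when keywords arrive
in the order given by `π` (the keyword arriving at time `t` is `π.symm t`) and bidders
are ranked by `σ`. -/
def ranking {n p : ℕ} (E : Fin n → Fin p → Bool) (π : Equiv.Perm (Fin n))
    (σ : Equiv.Perm (Fin p)) : List (Fin n × Fin p) :=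
  rankingAux E σ ((List.finRange n).map π.symm) ∅

/-- The dual process Ranking': bidders arrive in the order given by `σ`, and each
arriving bidder is matched to its available (unmatched) neighboring keyword `u`
minimizing `π u`. -/
def ranking' {n p : ℕ} (E : Fin n → Fin p → Bool) (π : Equiv.Perm (Fin n))
    (σ : Equiv.Perm (Fin p)) : List (Fin n × Fin p) :=
  (rankingAux (fun (v : Fin p) (u : Fin n) => E u v) π ((List.finRange p).map σ.symm) ∅).map
    fun x => (x.2, x.1)

lemma Fin.find?_eq_dite_min' {n : ℕ} (P : Fin n → Prop) [DecidablePred P] :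
    Fin.find? (fun i => decide (P i)) =
      if h : (Finset.univ.filter P).Nonempty then some ((Finset.univ.filter P).min' h)
      else none := by
  split_ifs with h
  · rw [Fin.find?_eq_some_iff]
    refine ⟨by simpa using Finset.min'_mem _ h, fun j hj => ?_⟩
    by_contra hPj
    exact (Finset.min'_le _ j (by simpa using hPj)).not_gt hj
  · rw [Fin.find?_eq_none_iff]
    intro i
    by_contra hPi
    exact h ⟨i, by simpa using hPi⟩

lemma List.Nodup.erase_filter_notMem {α : Type*} [DecidableEq α] {l : List α} (hl : l.Nodup)
    (m : Finset α) (v : α) :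
    (l.filter (· ∉ m)).erase v = l.filter (· ∉ insert v m) := by
  rw [(hl.filter _).erase_eq_filter, List.filter_filter]
  refine List.filter_congr fun w _ => ?_
  by_cases w = v <;> simp [*]

section Greedy

variable {α β : Type*}

/-- `R` lists the still unmatched right vertices in priority order. -/
def greedy [DecidableEq β] (E : α → β → Bool) : List α → List β → List (α × β)
  | [], _ => []
  | u :: L, R =>
    match R.find? (E u) with
    | some v => (u, v) :: greedy E L (R.erase v)
    | none => greedy E L R

@[simp]
lemma greedy_nil_right [DecidableEq β] (E : α → β → Bool) (L : List α) :
    greedy E L [] = [] := by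
  induction L with
  | nil => rfl
  | cons u L ih => simpa [greedy] using ih

variable [DecidableEq α] (E : β → α → Bool)

lemma greedy_cons_cons_of_eq_false {v : β} {u : α} (R : List β) (L : List α)
    (h : E v u = false) :
    greedy E (v :: R) (u :: L) =
      match L.find? (E v) with
      | some u' => (v, u') :: greedy E R (u :: L.erase u')
      | none => greedy E R (u :: L) := by
  rw [greedy, List.find?_cons_of_neg (by simp [h])]
  cases hfind : L.find? (E v) with
  | none => rfl
  | some u' =>
    have hne : u' ≠ u := by
      rintro rfl
      simp [List.find?_some hfind] at h
    dsimp only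
    rw [List.erase_cons_tail (by simpa using hne.symm : ¬(u == u') = true)]

lemma greedy_cons_right_of_forall_eq_false {u : α} (L : List α) (R : List β)
    (h : ∀ v ∈ R, E v u = false) :
    greedy E R (u :: L) = greedy E R L := by
  induction R generalizing L with
  | nil => rfl
  | cons v R ih =>
    have hR : ∀ w ∈ R, E w u = false := fun w hw => h w (List.mem_cons_of_mem _ hw)
    rw [greedy_cons_cons_of_eq_false E R L (h v List.mem_cons_self), greedy]
    cases L.find? (E v) with
    | none => exact ih L hR
    | some u' => exact congrArg _ (ih _ hR)

/-- The right vertices before `v₀` all pass over `u`, and when `v₀` comes `u` is its first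
available neighbour. -/
lemma greedy_append_cons_cons_perm [DecidableEq β] {u : α} {v₀ : β} (L : List α)
    (R₁ R₂ : List β) (h₀ : E v₀ u = true) (h₁ : ∀ v ∈ R₁, E v u = false) :
    (greedy E (R₁ ++ v₀ :: R₂) (u :: L)).Perm ((v₀, u) :: greedy E (R₁ ++ R₂) L) := by
  induction R₁ generalizing L with
  | nil => simp [greedy, h₀]
  | cons v R₁ ih =>
    have hR₁ : ∀ w ∈ R₁, E w u = false := fun w hw => h₁ w (List.mem_cons_of_mem _ hw)
    rw [List.cons_append, List.cons_append,
      greedy_cons_cons_of_eq_false E _ L (h₁ v List.mem_cons_self), greedy]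
    cases L.find? (E v) with
    | none => exact ih L hR₁
    | some u' => exact ((ih _ hR₁).cons (v, u')).trans (List.Perm.swap _ _ _)

end Greedy

theorem greedy_perm_greedy_flip {α β : Type*} [DecidableEq α] [DecidableEq β]
    (E : α → β → Bool) (L : List α) (R : List β) :
    (greedy E L R).Perm ((greedy (flip E) R L).map Prod.swap) := by
  induction L generalizing R with
  | nil => simp [greedy]
  | cons u L ih =>
    rw [greedy]
    cases hfind : R.find? (E u) with
    | none =>
      have hR : ∀ v ∈ R, flip E v u = false := fun v hv => by
        simpa [flip] using List.find?_eq_none.mp hfind v hv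
      rw [greedy_cons_right_of_forall_eq_false _ L R hR]
      exact ih R
    | some v₀ =>
      obtain ⟨h₀, R₁, R₂, rfl, hR₁⟩ := List.find?_eq_some_iff_append.mp hfind
      have hv₀ : v₀ ∉ R₁ := fun hv => by simpa [h₀] using hR₁ v₀ hv
      have herase : (R₁ ++ v₀ :: R₂).erase v₀ = R₁ ++ R₂ := by
        rw [List.erase_append_right _ hv₀, List.erase_cons_head]
      dsimp only
      rw [herase]
      refine ((ih _).cons (u, v₀)).trans ?_
      exact ((greedy_append_cons_cons_perm (flip E) L R₁ R₂ h₀ (by simpa [flip] using hR₁)).map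
        Prod.swap).symm

section Ranking

variable {p : ℕ} (σ : Equiv.Perm (Fin p))

def rankOrder : List (Fin p) := (List.finRange p).map σ.symm

lemma nodup_rankOrder : (rankOrder σ).Nodup :=
  (List.nodup_finRange p).map σ.symm.injective

lemma find?_filter_rankOrder (q : Fin p → Bool) (m : Finset (Fin p)) :
    ((rankOrder σ).filter (· ∉ m)).find? q =
      let cand := Finset.univ.filter fun r => q (σ.symm r) = true ∧ σ.symm r ∉ m
      if h : cand.Nonempty then some (σ.symm (cand.min' h)) else none := by
  rw [rankOrder, List.find?_filter, List.find?_map, ← Fin.find?_eq_find?_finRange]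
  have hpred : ((fun a => decide (decide (a ∉ m) = true ∧ q a = true)) ∘ σ.symm) =
      fun r => decide (q (σ.symm r) = true ∧ σ.symm r ∉ m) := by
    funext r
    simp [and_comm]
  rw [hpred, Fin.find?_eq_dite_min']
  dsimp only
  split_ifs <;> rfl

lemma rankingAux_eq_greedy {α : Type*} (E : α → Fin p → Bool) (l : List α)
    (matched : Finset (Fin p)) :
    rankingAux E σ l matched = greedy E l ((rankOrder σ).filter (· ∉ matched)) := by
  induction l generalizing matched with
  | nil => rfl
  | cons u l ih =>
    rw [rankingAux, greedy, find?_filter_rankOrder]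
    dsimp only
    split_ifs with h
    · dsimp only
      rw [ih, (nodup_rankOrder σ).erase_filter_notMem]
    · exact ih matched

lemma rankingAux_empty_eq_greedy {α : Type*} (E : α → Fin p → Bool) (l : List α) :
    rankingAux E σ l ∅ = greedy E l (rankOrder σ) := by
  rw [rankingAux_eq_greedy, List.filter_eq_self.mpr (by simp)]

end Ranking

/-- the matching produced by Ranking (keywords arrive by `π`, greedy by
`σ`) equals the matching produced by the dual process Ranking' (bidders arrive by `σ`,
greedy by `π`). -/
theorem ranking_duality {n p : ℕ} (E : Fin n → Fin p → Bool)
    (π : Equiv.Perm (Fin n)) (σ : Equiv.Perm (Fin p)) :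
    (ranking E π σ).toFinset = (ranking' E π σ).toFinset := by
  rw [ranking, ranking', rankingAux_empty_eq_greedy, rankingAux_empty_eq_greedy]
  exact List.toFinset_eq_of_perm _ _ (greedy_perm_greedy_flip E (rankOrder π) (rankOrder σ))
end

section
/- Monotonicity of Ranking: let H be a bipartite graph with arrival order π and ranking σ, let x be any vertex of H, and let H' = H \ {x} with the induced orderings. Then the size of the matching produced by Ranking on H' is at most the size of the matching produced by Ranking on H. -/
/-!
Blocking one more bidder `w` before a run of Ranking changes the size of the matching by at
most one, and never increases it. At the arriving keyword the two runs either pick the same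
bidder, or the unblocked run takes `w` itself; in both cases the remaining runs again start
from matched sets differing in one bidder, so induction on the arrival list applies. Deleting
a bidder is the same as blocking it from the start, and skipping an arriving keyword is
compensated by the bidder that keyword would have taken.
-/

theorem Finset.min'_erase_of_min'_ne {β : Type*} [LinearOrder β] {s : Finset β} {a : β}
    (hs : s.Nonempty) (h : (s.erase a).Nonempty) (ha : s.min' hs ≠ a) :
    (s.erase a).min' h = s.min' hs :=
  le_antisymm (Finset.min'_le _ _ (Finset.mem_erase.2 ⟨ha, Finset.min'_mem s hs⟩))
    (Finset.min'_subset h (Finset.erase_subset a s))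

section

variable {α : Type*} {p : ℕ} (E : α → Fin p → Bool) (σ : Equiv.Perm (Fin p))

def candidateRanks (u : α) (M : Finset (Fin p)) : Finset (Fin p) :=
  Finset.univ.filter fun r => E u (σ.symm r) = true ∧ σ.symm r ∉ M

theorem rankingAux_cons (u : α) (rest : List α) (M : Finset (Fin p)) :
    rankingAux E σ (u :: rest) M =
      if h : (candidateRanks E σ u M).Nonempty then
        (u, σ.symm ((candidateRanks E σ u M).min' h)) ::
          rankingAux E σ rest (insert (σ.symm ((candidateRanks E σ u M).min' h)) M)
      else rankingAux E σ rest M :=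
  rfl

theorem candidateRanks_insert (u : α) (M : Finset (Fin p)) (w : Fin p) :
    candidateRanks E σ u (insert w M) = (candidateRanks E σ u M).erase (σ w) := by
  ext r
  simp only [candidateRanks, Finset.mem_erase, Finset.mem_filter, Finset.mem_univ, true_and,
    Finset.mem_insert, not_or, ne_eq, Equiv.symm_apply_eq]
  tauto

theorem length_rankingAux_insert_le_and_le_add_one (L : List α) (M : Finset (Fin p))
    (w : Fin p) :
    (rankingAux E σ L (insert w M)).length ≤ (rankingAux E σ L M).length ∧
      (rankingAux E σ L M).length ≤ (rankingAux E σ L (insert w M)).length + 1 := by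
  induction L generalizing M w with
  | nil => simp [rankingAux]
  | cons u rest ih =>
    rw [rankingAux_cons, rankingAux_cons, candidateRanks_insert]
    set C := candidateRanks E σ u M
    by_cases hC : C.Nonempty
    swap
    · rw [dif_neg hC, dif_neg fun h => hC (h.mono (Finset.erase_subset _ _))]
      exact ih M w
    rw [dif_pos hC]
    by_cases hw : C.min' hC = σ w
    · -- the unblocked run takes `w`; the blocked one moves on to its next choice, if any
      rw [hw, Equiv.symm_apply_apply]
      split_ifs with hC'
      · have := ih (insert w M) (σ.symm ((C.erase (σ w)).min' hC'))
        simp only [List.length_cons]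
        omega
      · simp
    · have hC' : (C.erase (σ w)).Nonempty := ⟨_, Finset.mem_erase.2 ⟨hw, C.min'_mem hC⟩⟩
      rw [dif_pos hC', Finset.min'_erase_of_min'_ne hC hC' hw, Finset.insert_comm]
      have := ih (insert (σ.symm (C.min' hC)) M) w
      simp only [List.length_cons]
      omega

theorem length_rankingAux_le_of_sublist {L₁ L₂ : List α} (h : L₁.Sublist L₂)
    (M : Finset (Fin p)) : (rankingAux E σ L₁ M).length ≤ (rankingAux E σ L₂ M).length := by
  induction h generalizing M with
  | slnil => rfl
  | cons u _ ih =>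
    refine (ih M).trans ?_
    rw [rankingAux_cons]
    split_ifs with hC
    · exact (length_rankingAux_insert_le_and_le_add_one E σ _ M _).2
    · rfl
  | cons_cons u _ ih =>
    rw [rankingAux_cons, rankingAux_cons]
    split_ifs
    · exact Nat.succ_le_succ (ih _)
    · exact ih M

theorem rankingAux_and_bne_eq_insert (x : Fin p) (L : List α) (M : Finset (Fin p)) :
    rankingAux (fun u v => E u v && (v != x)) σ L M = rankingAux E σ L (insert x M) := by
  induction L generalizing M with
  | nil => rfl
  | cons u rest ih =>
    have hC : candidateRanks (fun u v => E u v && (v != x)) σ u M =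
        candidateRanks E σ u (insert x M) := by
      ext r
      simp only [candidateRanks, Finset.mem_filter, Finset.mem_univ, true_and,
        Bool.and_eq_true, bne_iff_ne, ne_eq, Finset.mem_insert, not_or]
      tauto
    rw [rankingAux_cons, rankingAux_cons, hC]
    split_ifs
    · rw [ih, Finset.insert_comm]
    · exact ih M

end

/-- monotonicity of Ranking: deleting a single vertex `x` of `H` (a
keyword, removed from the arrival order, or a bidder, made unavailable), keeping the
induced arrival order and ranking, can only decrease the size of the matching
produced by Ranking. -/
theorem ranking_monotone {n p : ℕ} (E : Fin n → Fin p → Bool)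
    (π : Equiv.Perm (Fin n)) (σ : Equiv.Perm (Fin p)) :
    (∀ x : Fin n,
      (rankingAux E σ ((((List.finRange n).map π.symm)).erase x) ∅).length ≤
        (ranking E π σ).length) ∧
    (∀ x : Fin p,
      (ranking (fun u v => E u v && (v != x)) π σ).length ≤ (ranking E π σ).length) := by
  refine ⟨fun x => length_rankingAux_le_of_sublist E σ (List.erase_sublist ..) ∅, fun x => ?_⟩
  rw [ranking, ranking, rankingAux_and_bne_eq_insert]
  exact (length_rankingAux_insert_le_and_le_add_one E σ _ ∅ x).1
end

section
/- Let H be a bipartite graph on U_H ∪ V with a map f : U_H → V such that each u is adjacent to f(u). For any ranking σ, if v = f(u) is unmatched by Ranking(σ), then u is matched by Ranking(σ) to a vertex whose rank under σ is strictly less than σ(v). -/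
/-!
When `u` arrives, `f u` is still free (it is never matched), so `u` is matched to the free
neighbour of least rank, whose rank is at most `σ (f u)`; it is not `f u` itself, hence the
inequality is strict.
-/

section RankingAux

variable {α : Type*} {p : ℕ} (E : α → Fin p → Bool) (σ : Equiv.Perm (Fin p))

/-- The set `cand` of `rankingAux`: it holds ranks, not bidders. -/
def freeNeighborRanks (u : α) (matched : Finset (Fin p)) : Finset (Fin p) :=
  Finset.univ.filter fun r => E u (σ.symm r) = true ∧ σ.symm r ∉ matched

variable {E σ}

theorem rank_mem_freeNeighborRanks {u : α} {v : Fin p} {matched : Finset (Fin p)} :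
    σ v ∈ freeNeighborRanks E σ u matched ↔ E u v = true ∧ v ∉ matched := by
  simp [freeNeighborRanks]

theorem rankingAux_cons_of_nonempty {u : α} {rest : List α} {matched : Finset (Fin p)}
    (h : (freeNeighborRanks E σ u matched).Nonempty) :
    rankingAux E σ (u :: rest) matched =
      (u, σ.symm ((freeNeighborRanks E σ u matched).min' h)) ::
        rankingAux E σ rest (insert (σ.symm ((freeNeighborRanks E σ u matched).min' h)) matched) :=
  dif_pos h

theorem rankingAux_cons_of_not_nonempty {u : α} {rest : List α} {matched : Finset (Fin p)}
    (h : ¬(freeNeighborRanks E σ u matched).Nonempty) :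
    rankingAux E σ (u :: rest) matched = rankingAux E σ rest matched :=
  dif_neg h

theorem exists_mem_rankingAux_rank_le {v : Fin p} {u : α} (hE : E u v = true) :
    ∀ {l : List α} {matched : Finset (Fin p)}, u ∈ l → v ∉ matched →
      v ∉ (rankingAux E σ l matched).map Prod.snd →
      ∃ w, (u, w) ∈ rankingAux E σ l matched ∧ σ w ≤ σ v
  | [], _, hu, _, _ => absurd hu List.not_mem_nil
  | u' :: rest, matched, hu, hvm, hvs => by
    by_cases hne : (freeNeighborRanks E σ u' matched).Nonempty
    · rw [rankingAux_cons_of_nonempty hne] at hvs ⊢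
      set w := σ.symm ((freeNeighborRanks E σ u' matched).min' hne)
      rcases List.mem_cons.1 hu with rfl | hu
      · have hv : σ v ∈ freeNeighborRanks E σ u matched :=
          rank_mem_freeNeighborRanks.2 ⟨hE, hvm⟩
        refine ⟨w, List.mem_cons_self, ?_⟩
        simpa [w] using Finset.min'_le _ _ hv
      · have hvw : v ≠ w := fun h => hvs (by simp [h])
        obtain ⟨w', hw', hle⟩ := exists_mem_rankingAux_rank_le hE hu
          (by simp [hvw, hvm]) (fun h => hvs (List.mem_cons_of_mem _ h))
        exact ⟨w', List.mem_cons_of_mem _ hw', hle⟩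
    · rw [rankingAux_cons_of_not_nonempty hne] at hvs ⊢
      rcases List.mem_cons.1 hu with rfl | hu
      · exact absurd ⟨_, rank_mem_freeNeighborRanks.2 ⟨hE, hvm⟩⟩ hne
      · exact exists_mem_rankingAux_rank_le hE hu hvm hvs

end RankingAux

/-- if `f : U_H → V` assigns to each keyword an adjacent bidder and
`v = f u` is left unmatched by Ranking with ranking `σ`, then `u` is matched by
Ranking to a bidder of strictly smaller rank than `σ (f u)`. -/
theorem ranking_unmatched_implies_lower_rank {n p : ℕ}
    (E : Fin n → Fin p → Bool) (π : Equiv.Perm (Fin n)) (σ : Equiv.Perm (Fin p))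
    (f : Fin n → Fin p) (hf : ∀ u, E u (f u) = true) (u : Fin n)
    (hunmatched : f u ∉ (ranking E π σ).map Prod.snd) :
    ∃ v' : Fin p, (u, v') ∈ ranking E π σ ∧ σ v' < σ (f u) := by
  have hu : u ∈ (List.finRange n).map π.symm := List.mem_map.2 ⟨π u, by simp⟩
  obtain ⟨w, hw, hle⟩ :=
    exists_mem_rankingAux_rank_le (hf u) hu (Finset.notMem_empty _) hunmatched
  have hw_ne : w ≠ f u := by
    rintro rfl
    exact hunmatched (List.mem_map_of_mem (f := Prod.snd) hw)
  exact ⟨w, hw, lt_of_le_of_ne hle (σ.injective.ne hw_ne)⟩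
end

section
/- Let u ∈ U_H with v = f(u) adjacent to u, fix 1 ≤ t ≤ n = |V|, let σ be a ranking of V and let σ' be obtained from σ by removing v and reinserting it at rank t. If v is unmatched by Ranking(σ'), then u is matched by Ranking(σ) to a vertex whose rank in σ is at most t. -/
/-!
Since `v` is never matched under `σ'`, the `σ'`-run does not change if `v` is declared matched
from the start. Once `v` is out of play, `σ` and `σ'` order the remaining bidders identically, so
the `σ`-run with `v` pre-matched is that same run. In it `u` receives some `x ≠ v` with
`σ' x < σ' v = t`, and `σ x ≤ t` because reinserting `v` moves every other rank by at most one.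
Finally, releasing a pre-matched bidder can only improve the partner of every keyword (each step
either makes the same choice in both runs, or the freer run takes the released bidder and the
runs differ again by a single matched bidder), so in the `σ`-run from scratch `u` receives a
bidder of `σ`-rank at most `σ x`.
-/

namespace Ranking

open Finset

variable {α : Type*} {p : ℕ} {E : α → Fin p → Bool} {σ σ' : Equiv.Perm (Fin p)}
  {u : α} {v : Fin p} {M : Finset (Fin p)}

def SameOrderOff (σ σ' : Equiv.Perm (Fin p)) (v : Fin p) : Prop :=
  ∀ w w' : Fin p, w ≠ v → w' ≠ v → (σ w ≤ σ w' ↔ σ' w ≤ σ' w')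

def candidates (E : α → Fin p → Bool) (σ : Equiv.Perm (Fin p)) (u : α) (M : Finset (Fin p)) :
    Finset (Fin p) :=
  univ.filter fun r => E u (σ.symm r) = true ∧ σ.symm r ∉ M

def HasCandidate (E : α → Fin p → Bool) (u : α) (M : Finset (Fin p)) : Prop :=
  ∃ w, E u w = true ∧ w ∉ M

lemma HasCandidate.anti {N : Finset (Fin p)} (hMN : M ⊆ N) (h : HasCandidate E u N) :
    HasCandidate E u M :=
  let ⟨w, hw, hwN⟩ := h
  ⟨w, hw, fun hwM => hwN (hMN hwM)⟩

lemma apply_mem_candidates {w : Fin p} :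
    σ w ∈ candidates E σ u M ↔ E u w = true ∧ w ∉ M := by
  simp [candidates]

lemma candidates_nonempty_iff : (candidates E σ u M).Nonempty ↔ HasCandidate E u M :=
  ⟨fun ⟨r, hr⟩ => ⟨σ.symm r, (apply_mem_candidates (σ := σ)).1 (by simpa using hr)⟩,
    fun ⟨w, hw⟩ => ⟨σ w, apply_mem_candidates.2 hw⟩⟩

def chosen (E : α → Fin p → Bool) (σ : Equiv.Perm (Fin p)) (u : α) (M : Finset (Fin p))
    (h : HasCandidate E u M) : Fin p :=
  σ.symm ((candidates E σ u M).min' (candidates_nonempty_iff.2 h))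

lemma chosen_spec (h : HasCandidate E u M) :
    E u (chosen E σ u M h) = true ∧ chosen E σ u M h ∉ M := by
  rw [← apply_mem_candidates (σ := σ), chosen, Equiv.apply_symm_apply]
  exact min'_mem _ _

lemma apply_chosen_le (h : HasCandidate E u M) {w : Fin p} (hw : E u w = true) (hwM : w ∉ M) :
    σ (chosen E σ u M h) ≤ σ w := by
  rw [chosen, Equiv.apply_symm_apply]
  exact min'_le _ _ (apply_mem_candidates.2 ⟨hw, hwM⟩)

lemma chosen_eq_of_forall_le (h : HasCandidate E u M) {b : Fin p} (hb : E u b = true)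
    (hbM : b ∉ M) (hmin : ∀ w, E u w = true → w ∉ M → σ b ≤ σ w) : chosen E σ u M h = b :=
  σ.injective <| le_antisymm (apply_chosen_le h hb hbM)
    (hmin _ (chosen_spec h).1 (chosen_spec h).2)

lemma hasCandidate_insert_of_chosen_ne (h : HasCandidate E u M) {b : Fin p}
    (hb : chosen E σ u M h ≠ b) : HasCandidate E u (insert b M) :=
  ⟨chosen E σ u M h, (chosen_spec h).1, by simp [hb, (chosen_spec h).2]⟩

lemma chosen_insert_of_chosen_ne (h : HasCandidate E u M) {b : Fin p}
    (h' : HasCandidate E u (insert b M)) (hb : chosen E σ u M h ≠ b) :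
    chosen E σ u (insert b M) h' = chosen E σ u M h :=
  chosen_eq_of_forall_le h' (chosen_spec h).1 (by simp [hb, (chosen_spec h).2])
    fun _ hw hwM => apply_chosen_le h hw fun hm => hwM (mem_insert_of_mem hm)

lemma chosen_eq_of_sameOrderOff (horder : SameOrderOff σ σ' v)
    (hv : v ∈ M) (h : HasCandidate E u M) : chosen E σ u M h = chosen E σ' u M h := by
  obtain ⟨hb, hbM⟩ := chosen_spec (σ := σ') h
  refine chosen_eq_of_forall_le h hb hbM fun w hw hwM => ?_
  exact (horder _ w (fun e => hbM (by rwa [e])) (fun e => hwM (by rwa [e]))).2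
    (apply_chosen_le h hw hwM)

lemma rankingAux_cons_of_hasCandidate (rest : List α) (h : HasCandidate E u M) :
    rankingAux E σ (u :: rest) M =
      (u, chosen E σ u M h) :: rankingAux E σ rest (insert (chosen E σ u M h) M) :=
  dif_pos (candidates_nonempty_iff.2 h)

lemma rankingAux_cons_of_not_hasCandidate (rest : List α) (h : ¬ HasCandidate E u M) :
    rankingAux E σ (u :: rest) M = rankingAux E σ rest M :=
  dif_neg (mt candidates_nonempty_iff.1 h)

theorem rankingAux_insert_of_notMem (l : List α) (M : Finset (Fin p))
    (hv : v ∉ (rankingAux E σ l M).map Prod.snd) :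
    rankingAux E σ l (insert v M) = rankingAux E σ l M := by
  induction l generalizing M with
  | nil => rfl
  | cons u rest ih =>
    by_cases h : HasCandidate E u M
    · rw [rankingAux_cons_of_hasCandidate rest h] at hv ⊢
      simp only [List.map_cons, List.mem_cons, not_or] at hv
      have hne : chosen E σ u M h ≠ v := Ne.symm hv.1
      have h' := hasCandidate_insert_of_chosen_ne h hne
      rw [rankingAux_cons_of_hasCandidate rest h', chosen_insert_of_chosen_ne h h' hne,
        insert_comm, ih _ hv.2]
    · have h' : ¬ HasCandidate E u (insert v M) := fun h' => h (h'.anti (subset_insert _ _))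
      rw [rankingAux_cons_of_not_hasCandidate rest h] at hv ⊢
      rw [rankingAux_cons_of_not_hasCandidate rest h', ih _ hv]

theorem rankingAux_eq_of_sameOrderOff (horder : SameOrderOff σ σ' v)
    (l : List α) (M : Finset (Fin p)) (hv : v ∈ M) :
    rankingAux E σ l M = rankingAux E σ' l M := by
  induction l generalizing M with
  | nil => rfl
  | cons u rest ih =>
    by_cases h : HasCandidate E u M
    · rw [rankingAux_cons_of_hasCandidate rest h, rankingAux_cons_of_hasCandidate rest h,
        chosen_eq_of_sameOrderOff horder hv h, ih _ (mem_insert_of_mem hv)]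
    · rw [rankingAux_cons_of_not_hasCandidate rest h, rankingAux_cons_of_not_hasCandidate rest h,
        ih _ hv]

theorem exists_mem_rankingAux_le_of_mem_insert (l : List α) (A : Finset (Fin p)) {b : Fin p}
    (hbA : b ∉ A) {q : α × Fin p} (hq : q ∈ rankingAux E σ l (insert b A)) :
    ∃ y, (q.1, y) ∈ rankingAux E σ l A ∧ σ y ≤ σ q.2 := by
  induction l generalizing A b with
  | nil => cases hq
  | cons u rest ih =>
    by_cases hA : HasCandidate E u A
    swap
    · have hB : ¬ HasCandidate E u (insert b A) := fun h => hA (h.anti (subset_insert _ _))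
      rw [rankingAux_cons_of_not_hasCandidate rest hB] at hq
      rw [rankingAux_cons_of_not_hasCandidate rest hA]
      exact ih A hbA hq
    rw [rankingAux_cons_of_hasCandidate rest hA]
    by_cases hcb : chosen E σ u A hA = b
    · subst hcb
      by_cases hB : HasCandidate E u (insert (chosen E σ u A hA) A)
      · rw [rankingAux_cons_of_hasCandidate rest hB] at hq
        obtain ⟨hc', hc'B⟩ := chosen_spec (σ := σ) hB
        rcases List.mem_cons.1 hq with rfl | hq
        · exact ⟨_, List.mem_cons_self,
            apply_chosen_le hA hc' fun h => hc'B (mem_insert_of_mem h)⟩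
        · obtain ⟨y, hy, hle⟩ := ih _ hc'B hq
          exact ⟨y, List.mem_cons_of_mem _ hy, hle⟩
      · rw [rankingAux_cons_of_not_hasCandidate rest hB] at hq
        exact ⟨q.2, List.mem_cons_of_mem _ hq, le_rfl⟩
    · have hB := hasCandidate_insert_of_chosen_ne hA hcb
      rw [rankingAux_cons_of_hasCandidate rest hB, chosen_insert_of_chosen_ne hA hB hcb] at hq
      rcases List.mem_cons.1 hq with rfl | hq
      · exact ⟨_, List.mem_cons_self, le_rfl⟩
      · rw [insert_comm] at hq
        obtain ⟨y, hy, hle⟩ := ih _ (by simp [Ne.symm hcb, hbA]) hq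
        exact ⟨y, List.mem_cons_of_mem _ hy, hle⟩

theorem exists_mem_rankingAux_le_of_notMem (hadj : E u v = true) (l : List α)
    (M : Finset (Fin p)) (hu : u ∈ l) (hvM : v ∉ M)
    (hv : v ∉ (rankingAux E σ l M).map Prod.snd) :
    ∃ x, (u, x) ∈ rankingAux E σ l M ∧ σ x ≤ σ v := by
  induction l generalizing M with
  | nil => cases hu
  | cons a rest ih =>
    by_cases h : HasCandidate E a M
    · rw [rankingAux_cons_of_hasCandidate rest h] at hv ⊢
      simp only [List.map_cons, List.mem_cons, not_or] at hv
      rcases List.mem_cons.1 hu with rfl | hu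
      · exact ⟨_, List.mem_cons_self, apply_chosen_le h hadj hvM⟩
      · obtain ⟨x, hx, hle⟩ := ih _ hu (by simp [hvM, hv.1]) hv.2
        exact ⟨x, List.mem_cons_of_mem _ hx, hle⟩
    · have hu : u ∈ rest :=
        (List.mem_cons.1 hu).resolve_left (by rintro rfl; exact h ⟨v, hadj, hvM⟩)
      rw [rankingAux_cons_of_not_hasCandidate rest h] at hv ⊢
      exact ih _ hu hvM hv

lemma card_filter_apply_lt (σ : Equiv.Perm (Fin p)) (x : Fin p) :
    #{w | σ w < σ x} = (σ x : ℕ) := by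
  rw [← Fin.card_Iio]
  refine card_nbij σ (fun w hw => by simpa using hw) σ.injective.injOn fun r hr => ?_
  exact ⟨σ.symm r, by simpa using hr, by simp⟩

lemma SameOrderOff.apply_le_apply_add_one (horder : SameOrderOff σ σ' v) {x : Fin p}
    (hxv : x ≠ v) : (σ x : ℕ) ≤ σ' x + 1 := by
  have hsub : ({w | σ w < σ x} : Finset (Fin p)) ⊆
      insert v ({w | σ' w < σ' x} : Finset (Fin p)) := by
    intro w hw
    rw [mem_filter] at hw
    by_cases hwv : w = v
    · exact hwv ▸ mem_insert_self _ _
    · have hwx : σ' w ≠ σ' x := σ'.injective.ne (by rintro rfl; exact lt_irrefl _ hw.2)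
      exact mem_insert_of_mem (by simpa using ((horder w x hwv hxv).1 hw.2.le).lt_of_ne hwx)
  simpa only [card_filter_apply_lt] using (card_le_card hsub).trans (card_insert_le _ _)

lemma SameOrderOff.apply_le_of_lt (horder : SameOrderOff σ σ' v) {x : Fin p} (hxv : x ≠ v)
    (hlt : σ' x < σ' v) : σ x ≤ σ' v := by
  have := horder.apply_le_apply_add_one hxv
  rw [Fin.lt_def] at hlt
  rw [Fin.le_def]
  omega

end Ranking

open Ranking in
/-- let `v` be adjacent to keyword `u`, and let `σ'` be obtained from `σ`
by removing `v` and reinserting it at rank `t` (so `σ' v = t` and the relative order of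
all other bidders is unchanged). If `v` is unmatched by Ranking under `σ'`, then `u` is
matched by Ranking under `σ` to a bidder of rank at most `t`. -/
theorem ranking_reinsertion {n p : ℕ}
    (E : Fin n → Fin p → Bool) (π : Equiv.Perm (Fin n))
    (σ σ' : Equiv.Perm (Fin p)) (u : Fin n) (v : Fin p)
    (hadj : E u v = true) (t : Fin p)
    (ht : σ' v = t)
    (horder : ∀ w w' : Fin p, w ≠ v → w' ≠ v → (σ w ≤ σ w' ↔ σ' w ≤ σ' w'))
    (hunmatched : v ∉ (ranking E π σ').map Prod.snd) :
    ∃ v' : Fin p, (u, v') ∈ ranking E π σ ∧ σ v' ≤ t := by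
  have hu : u ∈ (List.finRange n).map π.symm :=
    List.mem_map.2 ⟨π u, List.mem_finRange _, by simp⟩
  obtain ⟨x, hx, hx_le⟩ :=
    exists_mem_rankingAux_le_of_notMem hadj _ ∅ hu (Finset.notMem_empty v) hunmatched
  have hxv : x ≠ v := by
    rintro rfl
    exact hunmatched (List.mem_map.2 ⟨_, hx, rfl⟩)
  have hxσ : (u, x) ∈ rankingAux E σ ((List.finRange n).map π.symm) (insert v ∅) := by
    rwa [rankingAux_eq_of_sameOrderOff horder _ _ (Finset.mem_insert_self v ∅),
      rankingAux_insert_of_notMem _ _ hunmatched]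
  obtain ⟨y, hy, hyx⟩ := exists_mem_rankingAux_le_of_mem_insert _ ∅ (Finset.notMem_empty v) hxσ
  have hx_t : σ x ≤ t :=
    ht ▸ SameOrderOff.apply_le_of_lt horder hxv (hx_le.lt_of_ne (σ'.injective.ne hxv))
  exact ⟨y, hy, hyx.trans hx_t⟩
end

section
/- Let (x_t)_{t=1}^n be reals in [0,1] satisfying 1 − x_t ≤ (1/(kn)) Σ_{s=1}^t x_s for all 1 ≤ t ≤ n, and let S_n = Σ_{s=1}^n x_s. Then S_n ≥ Σ_{s=1}^n (kn/(kn+1))^s = kn(1 − (1 − 1/(kn+1))^n). -/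
/-!
Write `q = kn/(kn+1)` and `S_t = ∑_{s ≤ t} x_s`. The hypothesis at time `t` rearranges to
`S_t ≥ q (1 + S_{t-1})`, while the partial geometric sums `G_t = ∑_{s ≤ t} q^s` satisfy this
recurrence with equality, `G_t = q (1 + G_{t-1})`. Since `u ↦ q (1 + u)` is monotone and
`S_0 = G_0 = 0`, induction gives `S_t ≥ G_t`. The closed form follows from the same
recurrence, because `q (1 + kn) = kn`.
-/

open Finset

theorem sum_Icc_one_pow_succ (q : ℝ) (t : ℕ) :
    ∑ s ∈ Icc 1 (t + 1), q ^ s = q * (1 + ∑ s ∈ Icc 1 t, q ^ s) := by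
  induction t with
  | zero => simp
  | succ t ih =>
    rw [sum_Icc_succ_top (show 1 ≤ t + 1 + 1 by omega)]
    nth_rw 1 [ih]
    rw [sum_Icc_succ_top (show 1 ≤ t + 1 by omega)]
    ring

theorem sum_Icc_one_pow_le_of_recurrence {q : ℝ} (hq : 0 ≤ q) {S : ℕ → ℝ} {n : ℕ}
    (hS₀ : S 0 = 0) (hS : ∀ t < n, q * (1 + S t) ≤ S (t + 1)) :
    ∀ t ≤ n, ∑ s ∈ Icc 1 t, q ^ s ≤ S t := by
  intro t
  induction t with
  | zero => simp [hS₀]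
  | succ t ih =>
    intro ht
    calc ∑ s ∈ Icc 1 (t + 1), q ^ s = q * (1 + ∑ s ∈ Icc 1 t, q ^ s) := sum_Icc_one_pow_succ q t
      _ ≤ q * (1 + S t) := by gcongr; exact ih (by omega)
      _ ≤ S (t + 1) := hS t (by omega)

theorem sum_Icc_one_pow_div_add_one {a : ℝ} (ha : a + 1 ≠ 0) (m : ℕ) :
    ∑ s ∈ Icc 1 m, (a / (a + 1)) ^ s = a * (1 - (a / (a + 1)) ^ m) := by
  induction m with
  | zero => simp
  | succ m ih =>
    rw [sum_Icc_one_pow_succ, ih]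
    linear_combination div_mul_cancel₀ a ha

theorem div_add_one_mul_one_add_le {a S y : ℝ} (ha : 0 < a) (h : 1 - y ≤ 1 / a * (S + y)) :
    a / (a + 1) * (1 + S) ≤ S + y := by
  rw [div_mul_eq_mul_div, div_le_iff₀ (by linarith)]
  rw [one_div_mul_eq_div, le_div_iff₀ ha] at h
  linarith

theorem ranking_sum_recurrence_general (k n : ℕ) (hk : 1 ≤ k) (hn : 1 ≤ n)
    (x : ℕ → ℝ)
    (hrec : ∀ t, 1 ≤ t → t ≤ n →
      1 - x t ≤ (1 / ((k : ℝ) * n)) * ∑ s ∈ Finset.Icc 1 t, x s) :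
    (∑ s ∈ Finset.Icc 1 n, ((k : ℝ) * n / ((k : ℝ) * n + 1)) ^ s ≤
        ∑ s ∈ Finset.Icc 1 n, x s) ∧
    (∑ s ∈ Finset.Icc 1 n, ((k : ℝ) * n / ((k : ℝ) * n + 1)) ^ s =
        (k : ℝ) * n * (1 - (1 - 1 / ((k : ℝ) * n + 1)) ^ n)) := by
  have ha : 0 < (k : ℝ) * n := mul_pos (by exact_mod_cast hk) (by exact_mod_cast hn)
  refine ⟨?_, ?_⟩
  · refine sum_Icc_one_pow_le_of_recurrence (S := fun t => ∑ s ∈ Icc 1 t, x s)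
      (by positivity) (by simp) (fun t ht => ?_) n le_rfl
    have h := hrec (t + 1) (by omega) ht
    rw [sum_Icc_succ_top (by omega)] at h ⊢
    exact div_add_one_mul_one_add_le ha h
  · have hq : 1 - 1 / ((k : ℝ) * n + 1) = k * n / (k * n + 1) := by field_simp; ring
    rw [hq]
    exact sum_Icc_one_pow_div_add_one (by positivity) n

/-- if `x_1, …, x_n ∈ [0,1]` satisfy `1 − x_t ≤ (1/(kn)) ∑_{s=1}^t x_s`
for all `1 ≤ t ≤ n`, then `S_n = ∑_{s=1}^n x_s ≥ ∑_{s=1}^n (kn/(kn+1))^s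
= kn (1 − (1 − 1/(kn+1))^n)`. -/
theorem ranking_sum_recurrence (k n : ℕ) (hk : 1 ≤ k) (hn : 1 ≤ n)
    (x : ℕ → ℝ)
    (hx : ∀ t, 1 ≤ t → t ≤ n → 0 ≤ x t ∧ x t ≤ 1)
    (hrec : ∀ t, 1 ≤ t → t ≤ n →
      1 - x t ≤ (1 / ((k : ℝ) * n)) * ∑ s ∈ Finset.Icc 1 t, x s) :
    (∑ s ∈ Finset.Icc 1 n, ((k : ℝ) * n / ((k : ℝ) * n + 1)) ^ s ≤
        ∑ s ∈ Finset.Icc 1 n, x s) ∧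
    (∑ s ∈ Finset.Icc 1 n, ((k : ℝ) * n / ((k : ℝ) * n + 1)) ^ s =
        (k : ℝ) * n * (1 - (1 - 1 / ((k : ℝ) * n + 1)) ^ n)) :=
  ranking_sum_recurrence_general k n hk hn x hrec
end

section
/- Let G be a bipartite graph whose maximum matching has size OPT, and let H be a left k-copy of G. The expected size of the matching produced by Ranking (with a uniformly random ranking of the bidders) on H is at least k·OPT·(1 − e^{−1/k} + o(1)). -/
-- The expected size of the matching produced by Ranking with a uniformly random
-- ranking of the bidders (fixed arrival order `π`).
noncomputable def rankExpSize {nH nV : ℕ} (E : Fin nH → Fin nV → Bool)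
    (π : Equiv.Perm (Fin nH)) : ℝ :=
  (∑ σ : Equiv.Perm (Fin nV), ((ranking E π σ).length : ℝ)) /
    (Fintype.card (Equiv.Perm (Fin nV)))

/-- A matching of the bipartite graph `E`: a set of adjacent pairs, no two sharing a
keyword or a bidder. -/
def IsMatchingSet {nU nV : ℕ} (E : Fin nU → Fin nV → Bool)
    (S : Finset (Fin nU × Fin nV)) : Prop :=
  (∀ e ∈ S, E e.1 e.2 = true) ∧
  (∀ e ∈ S, ∀ e' ∈ S, e.1 = e'.1 → e = e') ∧
  (∀ e ∈ S, ∀ e' ∈ S, e.2 = e'.2 → e = e')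

/-!
Primal-dual analysis of Ranking. When a keyword is matched to the bidder of rank `j`, the unit
of gain is split: the bidder receives `g j = e ^ (((j + 1) / (n + 1) - 1) / k)` and the keyword
`1 - g j`. Each edge `(u, v)` of a maximum matching of `G` gives the group formed by the `k`
copies of `u` and the bidder `v`; these groups are disjoint, so the size of the matching found
by Ranking dominates their total gain, and it suffices to show that each group gains
`k (1 - e ^ (-1 / k)) - O(1 / n)` in expectation.

For this, group the rankings according to the ranking `τ` obtained by moving `v` to the last
place. As the rank `t` of `v` varies, Ranking with `v` removed does not change; each copy `x`
of `u` keeps a partner of rank at most `θ x + 1`, where `θ x` is the rank of its partner with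
`v` removed, and `v` itself is matched whenever `t ≤ max θ`. Summing the gains over `t` gives a
Riemann sum of `e ^ ((y - 1) / k)`, which yields the bound.
-/

namespace Ranking

open Finset Equiv

section Greedy

variable {α : Type*} {p : ℕ} {E : α → Fin p → Bool} {σ : Perm (Fin p)}

def cands (E : α → Fin p → Bool) (u : α) (S : Finset (Fin p)) : Finset (Fin p) :=
  univ.filter fun w => E u w = true ∧ w ∉ S

@[simp]
lemma mem_cands {u : α} {S : Finset (Fin p)} {w : Fin p} :
    w ∈ cands E u S ↔ E u w = true ∧ w ∉ S := by
  simp [cands]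

lemma cands_insert (u : α) (S : Finset (Fin p)) (d : Fin p) :
    cands E u (insert d S) = (cands E u S).erase d := by
  ext w
  simp only [mem_cands, mem_erase, mem_insert]
  tauto

def pick (σ : Perm (Fin p)) (C : Finset (Fin p)) (h : C.Nonempty) : Fin p :=
  σ.symm ((C.map σ.toEmbedding).min' h.map)

lemma pick_mem (σ : Perm (Fin p)) {C : Finset (Fin p)} (h : C.Nonempty) : pick σ C h ∈ C := by
  obtain ⟨c, hc, hcσ⟩ := mem_map.mp ((C.map σ.toEmbedding).min'_mem h.map)
  rw [pick, ← hcσ]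
  simpa using hc

lemma pick_le (σ : Perm (Fin p)) {C : Finset (Fin p)} (h : C.Nonempty) {c : Fin p} (hc : c ∈ C) :
    σ (pick σ C h) ≤ σ c := by
  rw [pick, Equiv.apply_symm_apply]
  exact min'_le _ _ (mem_map_of_mem _ hc)

lemma pick_eq {C : Finset (Fin p)} (h : C.Nonempty) {b : Fin p} (hb : b ∈ C)
    (hmin : ∀ c ∈ C, σ b ≤ σ c) : pick σ C h = b :=
  σ.injective (le_antisymm (pick_le σ h hb) (hmin _ (pick_mem σ h)))

lemma rankingAux_cons (u : α) (l : List α) (S : Finset (Fin p)) :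
    rankingAux E σ (u :: l) S =
      if h : (cands E u S).Nonempty then
        (u, pick σ _ h) :: rankingAux E σ l (insert (pick σ _ h) S)
      else rankingAux E σ l S := by
  have hcand : (univ.filter fun r => E u (σ.symm r) = true ∧ σ.symm r ∉ S) =
      (cands E u S).map σ.toEmbedding := by
    ext r
    simp only [mem_filter, mem_univ, true_and, mem_map_equiv, mem_cands]
  rw [rankingAux]
  simp only [hcand, Finset.map_nonempty]
  rfl

lemma map_fst_rankingAux_sublist (L : List α) (S : Finset (Fin p)) :
    ((rankingAux E σ L S).map Prod.fst).Sublist L := by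
  induction L generalizing S with
  | nil => simp [rankingAux]
  | cons u l ih =>
    rw [rankingAux_cons]
    split_ifs
    · simpa using (ih _).cons_cons u
    · exact (ih S).cons u

lemma nodup_rankingAux {L : List α} (hL : L.Nodup) (S : Finset (Fin p)) :
    (rankingAux E σ L S).Nodup :=
  (hL.sublist (map_fst_rankingAux_sublist L S)).of_map _

lemma eq_of_mem_rankingAux {L : List α} (hL : L.Nodup) {S : Finset (Fin p)} {x : α}
    {w₁ w₂ : Fin p} (h₁ : (x, w₁) ∈ rankingAux E σ L S) (h₂ : (x, w₂) ∈ rankingAux E σ L S) :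
    w₁ = w₂ :=
  congrArg Prod.snd
    (List.inj_on_of_nodup_map (hL.sublist (map_fst_rankingAux_sublist L S)) h₁ h₂ rfl)

lemma notMem_of_mem_rankingAux {L : List α} {S : Finset (Fin p)} {x : α} {w : Fin p}
    (h : (x, w) ∈ rankingAux E σ L S) : w ∉ S := by
  induction L generalizing S with
  | nil => simp [rankingAux] at h
  | cons u l ih =>
    rw [rankingAux_cons] at h
    split_ifs at h with hC
    · rcases List.mem_cons.mp h with h | h
      · rw [Prod.mk.inj h |>.2]
        exact (mem_cands.mp (pick_mem σ hC)).2
      · exact fun hw => ih h (mem_insert_of_mem hw)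
    · exact ih h

lemma rankingAux_congr {σ₁ σ₂ : Perm (Fin p)} (L : List α) (S : Finset (Fin p))
    (h : ∀ w ∉ S, ∀ w' ∉ S, σ₁ w ≤ σ₁ w' ↔ σ₂ w ≤ σ₂ w') :
    rankingAux E σ₁ L S = rankingAux E σ₂ L S := by
  induction L generalizing S with
  | nil => rfl
  | cons u l ih =>
    rw [rankingAux_cons, rankingAux_cons]
    split_ifs with hC
    · have hmin := (mem_cands.mp (pick_mem σ₁ hC)).2
      have hpick : pick σ₂ _ hC = pick σ₁ _ hC := pick_eq hC (pick_mem σ₁ hC) fun c hc =>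
        (h _ hmin _ (mem_cands.mp hc).2).mp (pick_le σ₁ hC hc)
      rw [hpick, ih]
      intro w hw w' hw'
      exact h w (fun h' => hw (mem_insert_of_mem h')) w' (fun h' => hw' (mem_insert_of_mem h'))
    · exact ih S h

/-- The alternating-path argument: at every step the two runs differ by a single displaced
bidder. -/
lemma exists_mem_rankingAux_le_of_mem_insert_s13 (L : List α) (S : Finset (Fin p)) (d : Fin p)
    {x : α} {w₂ : Fin p} (h : (x, w₂) ∈ rankingAux E σ L (insert d S)) :
    ∃ w₁, (x, w₁) ∈ rankingAux E σ L S ∧ σ w₁ ≤ σ w₂ := by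
  induction L generalizing S d with
  | nil => simp [rankingAux] at h
  | cons u l ih =>
    by_cases hdS : d ∈ S
    · rw [insert_eq_of_mem hdS] at h
      exact ⟨w₂, h, le_rfl⟩
    rw [rankingAux_cons, cands_insert] at h
    rw [rankingAux_cons]
    by_cases hT : ((cands E u S).erase d).Nonempty
    · have hS : (cands E u S).Nonempty := hT.mono (erase_subset _ _)
      rw [dif_pos hT] at h
      rw [dif_pos hS]
      set b := pick σ _ hT
      set a := pick σ _ hS
      have hb : b ∈ (cands E u S).erase d := pick_mem σ hT
      have hab : σ a ≤ σ b := pick_le σ hS (mem_of_mem_erase hb)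
      rcases List.mem_cons.mp h with h | h
      · obtain ⟨rfl, rfl⟩ := Prod.mk.inj h
        exact ⟨a, List.mem_cons_self, hab⟩
      by_cases had : a = d
      · obtain ⟨w₁, hw₁, hle⟩ := ih (insert d S) b h
        exact ⟨w₁, List.mem_cons_of_mem _ (had ▸ hw₁), hle⟩
      · have hba : b = a := pick_eq hT (mem_erase.mpr ⟨had, pick_mem σ hS⟩) fun c hc =>
          pick_le σ hS (mem_of_mem_erase hc)
        rw [hba, insert_comm] at h
        obtain ⟨w₁, hw₁, hle⟩ := ih (insert a S) d h
        exact ⟨w₁, List.mem_cons_of_mem _ hw₁, hle⟩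
    · rw [dif_neg hT] at h
      split_ifs with hS
      · have had : pick σ _ hS = d := by
          by_contra had
          exact hT ⟨_, mem_erase.mpr ⟨had, pick_mem σ hS⟩⟩
        rw [had]
        exact ⟨w₂, List.mem_cons_of_mem _ h, le_rfl⟩
      · exact ih S d h

lemma rankingAux_insert_of_forall_ne (L : List α) (S : Finset (Fin p)) {v : Fin p}
    (hv : ∀ q ∈ rankingAux E σ L S, q.2 ≠ v) :
    rankingAux E σ L (insert v S) = rankingAux E σ L S := by
  induction L generalizing S with
  | nil => rfl
  | cons u l ih =>
    rw [rankingAux_cons] at hv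
    rw [rankingAux_cons, rankingAux_cons, cands_insert]
    by_cases hS : (cands E u S).Nonempty
    · rw [dif_pos hS] at hv
      have hav : pick σ _ hS ≠ v := hv _ List.mem_cons_self
      have hT : ((cands E u S).erase v).Nonempty := ⟨_, mem_erase.mpr ⟨hav, pick_mem σ hS⟩⟩
      have hpick : pick σ _ hT = pick σ _ hS :=
        pick_eq hT (mem_erase.mpr ⟨hav, pick_mem σ hS⟩) fun c hc =>
          pick_le σ hS (mem_of_mem_erase hc)
      rw [dif_pos hT, dif_pos hS, hpick, insert_comm,
        ih _ fun q hq => hv q (List.mem_cons_of_mem _ hq)]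
    · rw [dif_neg hS] at hv
      rw [dif_neg fun hT => hS (hT.mono (erase_subset _ _)), dif_neg hS, ih S hv]

lemma exists_mem_rankingAux_lt_of_forall_ne {L : List α} {S : Finset (Fin p)} {v : Fin p}
    (hv : ∀ q ∈ rankingAux E σ L S, q.2 ≠ v) (hvS : v ∉ S) {x : α} (hx : x ∈ L)
    (hxv : E x v = true) : ∃ w, (x, w) ∈ rankingAux E σ L S ∧ σ w < σ v := by
  induction L generalizing S with
  | nil => simp at hx
  | cons u l ih =>
    rw [rankingAux_cons] at hv ⊢
    split_ifs at hv ⊢ with hS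
    · have hav : pick σ _ hS ≠ v := hv _ List.mem_cons_self
      by_cases hxu : x = u
      · subst hxu
        refine ⟨_, List.mem_cons_self, lt_of_le_of_ne ?_ (σ.injective.ne hav)⟩
        exact pick_le σ hS (mem_cands.mpr ⟨hxv, hvS⟩)
      · obtain ⟨w, hw, hlt⟩ := ih (fun q hq => hv q (List.mem_cons_of_mem _ hq))
          (by simp [hvS, Ne.symm hav]) (List.mem_of_ne_of_mem hxu hx)
        exact ⟨w, List.mem_cons_of_mem _ hw, hlt⟩
    · have hxu : x ≠ u := by
        rintro rfl
        exact hS ⟨v, mem_cands.mpr ⟨hxv, hvS⟩⟩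
      exact ih hv hvS (List.mem_of_ne_of_mem hxu hx)

end Greedy

section Weight

open Real

variable {k n : ℕ}

/-- The discretization at `y = (j + 1) / (n + 1)` of the price `e ^ ((y - 1) / k)` that the
primal-dual analysis of Ranking on `k`-copies charges for a bidder of rank `j`. -/
noncomputable def weight (k n j : ℕ) : ℝ := exp (((j : ℝ) - n) / (k * (n + 1)))

lemma weight_nonneg (j : ℕ) : 0 ≤ weight k n j := (exp_pos _).le

lemma weight_le_one {j : ℕ} (hj : j ≤ n) : weight k n j ≤ 1 := by
  rw [weight, exp_le_one_iff]
  exact div_nonpos_of_nonpos_of_nonneg (sub_nonpos.mpr (by exact_mod_cast hj)) (by positivity)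

lemma one_le_weight {j : ℕ} (hj : n ≤ j) : 1 ≤ weight k n j :=
  one_le_exp (div_nonneg (sub_nonneg.mpr (by exact_mod_cast hj)) (by positivity))

lemma weight_mono {i j : ℕ} (h : i ≤ j) : weight k n i ≤ weight k n j :=
  exp_le_exp.mpr (div_le_div_of_nonneg_right (by simpa using h) (by positivity))

lemma weight_succ_le (hk : 1 ≤ k) {j : ℕ} (hj : j ≤ n) :
    weight k n (j + 1) ≤ weight k n j + 2 / (k * (n + 1)) := by
  set c : ℝ := 1 / (k * (n + 1))
  have hc0 : 0 ≤ c := by positivity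
  have hc1 : c ≤ 1 := by
    rw [div_le_one (by positivity)]
    nlinarith [(Nat.one_le_cast.mpr hk : (1 : ℝ) ≤ k), (n.cast_nonneg : (0 : ℝ) ≤ n)]
  have hsucc : weight k n (j + 1) = weight k n j * exp c := by
    rw [weight, weight, ← exp_add]
    congr 1
    push_cast
    ring
  have hexp : exp c ≤ 1 + 2 * c := by
    have := (abs_le.mp (abs_exp_sub_one_le (x := c) (by rwa [abs_of_nonneg hc0]))).2
    rw [abs_of_nonneg hc0] at this
    linarith
  have hw := weight_le_one (k := k) hj
  calc weight k n (j + 1) = weight k n j * exp c := hsucc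
    _ ≤ weight k n j * (1 + 2 * c) := by gcongr; exact weight_nonneg j
    _ ≤ weight k n j + 2 / (k * (n + 1)) := by
      have : 2 / ((k : ℝ) * (n + 1)) = 2 * c := by ring
      nlinarith [weight_nonneg (k := k) (n := n) j]

/-- A right-endpoint Riemann sum of the increasing function `exp` dominates its integral. -/
lemma exp_add_mul_sub_exp_le (a c : ℝ) (m : ℕ) :
    exp (a + m * c) - exp a ≤ c * ∑ t ∈ Finset.range m, exp (a + (t + 1) * c) := by
  have hstep (t : ℕ) : exp (a + (t + 1) * c) - exp (a + t * c) ≤ c * exp (a + (t + 1) * c) := by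
    have hsplit : exp (a + t * c) = exp (a + (t + 1) * c) * exp (-c) := by
      rw [← exp_add]
      ring_nf
    rw [hsplit]
    nlinarith [add_one_le_exp (-c), exp_pos (a + (t + 1) * c)]
  calc exp (a + m * c) - exp a
      = ∑ t ∈ Finset.range m, (exp (a + ((t + 1 : ℕ) : ℝ) * c) - exp (a + (t : ℝ) * c)) := by
        rw [Finset.sum_range_sub (fun t : ℕ => exp (a + t * c))]
        simp
    _ ≤ ∑ t ∈ Finset.range m, c * exp (a + (t + 1) * c) :=
        Finset.sum_le_sum fun t _ => by push_cast; exact hstep t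
    _ = c * ∑ t ∈ Finset.range m, exp (a + (t + 1) * c) := (Finset.mul_sum ..).symm

lemma sub_two_le_weight_gain (hk : 1 ≤ k) {R : ℕ} (hR : R ≤ n) :
    (n + 1) * (k * (1 - exp (-1 / k))) - 2 ≤
      (n + 1) * (k * (1 - weight k n (R + 1))) + ∑ j ∈ Finset.range (R + 1), weight k n j := by
  have hk' : (0 : ℝ) < k := by exact_mod_cast hk
  set c : ℝ := 1 / (k * (n + 1))
  have hkc : (k : ℝ) * (n + 1) * c = 1 := by simp only [c]; field_simp
  have hsum := exp_add_mul_sub_exp_le (-(n + 1) * c) c (R + 1)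
  have hR' : exp (-(n + 1) * c + ((R + 1 : ℕ) : ℝ) * c) = weight k n R := by
    rw [weight]
    congr 1
    push_cast
    ring
  have h0 : exp (-(n + 1) * c) = exp (-1 / k) := by
    congr 1
    simp only [c]
    field_simp
  have ht : ∀ t : ℕ, exp (-(n + 1) * c + (t + 1) * c) = weight k n t := fun t => by
    rw [weight]
    congr 1
    ring
  simp only [hR', h0, ht] at hsum
  have hkn : (0 : ℝ) < k * (n + 1) := by positivity
  have hprice := mul_le_mul_of_nonneg_left hsum hkn.le
  have hsucc := mul_le_mul_of_nonneg_left (weight_succ_le hk hR) hkn.le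
  rw [← mul_assoc, hkc, one_mul] at hprice
  rw [mul_add _ (weight k n R), mul_div_cancel₀ _ hkn.ne'] at hsucc
  linarith

end Weight

section Gain

variable {α β : Type*} [DecidableEq α] [DecidableEq β]

/-- Each matched pair `(x, w) ∈ T` splits its unit of gain into `f w` for the bidder and
`1 - f w` for the keyword; `edgeGain` collects what the keywords in `U` and the bidder `v`
receive. -/
def edgeGain (f : β → ℝ) (T : Finset (α × β)) (U : Finset α) (v : β) : ℝ :=
  (∑ q ∈ T, if q.1 ∈ U then 1 - f q.2 else 0) + ∑ q ∈ T, if q.2 = v then f q.2 else 0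

lemma sum_ite_le_of_subsingleton {ι : Type*} (s : Finset ι) (P : ι → Prop) [DecidablePred P]
    {c : ℝ} (hc : 0 ≤ c) (hP : ∀ i ∈ s, ∀ j ∈ s, P i → P j → i = j) :
    (∑ i ∈ s, if P i then c else 0) ≤ c := by
  rw [← sum_filter, sum_const, nsmul_eq_mul]
  refine mul_le_of_le_one_left hc ?_
  have : (s.filter P).card ≤ 1 := card_le_one.mpr fun i hi j hj =>
    hP i (mem_filter.mp hi).1 j (mem_filter.mp hj).1 (mem_filter.mp hi).2 (mem_filter.mp hj).2
  exact_mod_cast this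

lemma sum_edgeGain_le_card {f : β → ℝ} (hf0 : ∀ b, 0 ≤ f b) (hf1 : ∀ b, f b ≤ 1)
    (T : Finset (α × β)) {ι : Type*} (M : Finset ι) (U : ι → Finset α) (v : ι → β)
    (hU : (M : Set ι).PairwiseDisjoint U) (hv : Set.InjOn v M) :
    ∑ i ∈ M, edgeGain f T (U i) (v i) ≤ T.card := by
  simp only [edgeGain, sum_add_distrib]
  rw [sum_comm, sum_comm (s := M), ← sum_add_distrib, card_eq_sum_ones, Nat.cast_sum]
  refine sum_le_sum fun q _ => ?_
  have hkeyword := sum_ite_le_of_subsingleton M (fun i => q.1 ∈ U i) (sub_nonneg.mpr (hf1 q.2))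
    fun i hi j hj hqi hqj => hU.elim hi hj (not_disjoint_iff.mpr ⟨q.1, hqi, hqj⟩)
  have hbidder := sum_ite_le_of_subsingleton M (fun i => q.2 = v i) (hf0 q.2)
    fun i hi j hj hqi hqj => hv hi hj (hqi.symm.trans hqj)
  push_cast
  linarith

lemma le_edgeGain {f : β → ℝ} (hf0 : ∀ b, 0 ≤ f b) (hf1 : ∀ b, f b ≤ 1)
    {T : Finset (α × β)} {U : Finset α} {v : β} {a : ℝ}
    (ha : ∀ x ∈ U, a ≤ 0 ∨ ∃ w, (x, w) ∈ T ∧ a ≤ 1 - f w) {b : ℝ}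
    (hb : b ≤ 0 ∨ (∃ x, (x, v) ∈ T) ∧ b ≤ f v) :
    U.card * a + b ≤ edgeGain f T U v := by
  have hkeyword (x : α) : ∀ q ∈ T, 0 ≤ if q.1 = x then 1 - f q.2 else 0 := fun q _ => by
    split_ifs
    exacts [sub_nonneg.mpr (hf1 q.2), le_rfl]
  have hbidder : ∀ q ∈ T, 0 ≤ if q.2 = v then f q.2 else 0 := fun q _ => by
    split_ifs
    exacts [hf0 q.2, le_rfl]
  refine add_le_add ?_ ?_
  · calc U.card * a = ∑ x ∈ U, a := by simp
      _ ≤ ∑ x ∈ U, ∑ q ∈ T, if q.1 = x then 1 - f q.2 else 0 := sum_le_sum fun x hx => by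
          rcases ha x hx with ha | ⟨w, hw, ha⟩
          · exact ha.trans (sum_nonneg (hkeyword x))
          · exact ha.trans (by simpa using single_le_sum (hkeyword x) hw)
      _ = ∑ q ∈ T, if q.1 ∈ U then 1 - f q.2 else 0 := by
          rw [sum_comm]
          exact sum_congr rfl fun q _ => sum_ite_eq U q.1 _
  · rcases hb with hb | ⟨⟨x, hx⟩, hb⟩
    · exact hb.trans (sum_nonneg hbidder)
    · exact hb.trans (by simpa using single_le_sum hbidder hx)

end Gain

section MoveLast

open Fin

variable {n : ℕ}

/-- If `τ` ranks some bidder last, `moveLast t τ` ranks it `t`-th and keeps the relative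
order of all other bidders. -/
def moveLast (t : Fin (n + 1)) (τ : Perm (Fin (n + 1))) : Perm (Fin (n + 1)) :=
  cycleIcc t (last n) * τ

lemma moveLast_apply_of_eq_last {t : Fin (n + 1)} {τ : Perm (Fin (n + 1))} {v : Fin (n + 1)}
    (hτ : τ v = last n) : moveLast t τ v = t := by
  rw [moveLast, Perm.mul_apply, hτ, cycleIcc_of_last (le_last t)]

lemma moveLast_apply_val {t : Fin (n + 1)} {τ : Perm (Fin (n + 1))} {w : Fin (n + 1)}
    (hw : τ w ≠ last n) : (moveLast t τ w : ℕ) = if τ w < t then (τ w : ℕ) else τ w + 1 := by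
  rw [moveLast, Perm.mul_apply]
  split_ifs with hwt
  · rw [cycleIcc_of_lt hwt]
  · rw [cycleIcc_of_ge_of_lt (not_lt.mp hwt) (lt_last_iff_ne_last.mpr hw),
      val_add_one_of_lt (lt_last_iff_ne_last.mpr hw)]

lemma sum_perm_eq_sum_moveLast {M : Type*} [AddCommMonoid M] (v : Fin (n + 1))
    (F : Perm (Fin (n + 1)) → M) :
    ∑ σ, F σ = ∑ τ with τ v = last n, ∑ t, F (moveLast t τ) := by
  rw [← sum_product']
  symm
  refine sum_nbij' (fun x => moveLast x.2 x.1)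
    (fun σ => ((cycleIcc (σ v) (last n))⁻¹ * σ, σ v)) (by simp) ?_ ?_ (by simp [moveLast])
    (by simp)
  · intro σ _
    simp [Equiv.symm_apply_eq, cycleIcc_of_last (le_last (σ v))]
  · rintro ⟨τ, t⟩ h
    simp only [mem_product, mem_filter] at h
    have ht : moveLast t τ v = t := moveLast_apply_of_eq_last h.1.2
    simp only [ht, Prod.mk.injEq, and_true]
    rw [moveLast, inv_mul_cancel_left]

end MoveLast

section Threshold

open Fin

variable {α : Type*} {n : ℕ} {E : α → Fin (n + 1) → Bool} {L : List α} {v : Fin (n + 1)}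
  {τ : Perm (Fin (n + 1))}

lemma rankingAux_moveLast_singleton (hτ : τ v = last n) (t : Fin (n + 1)) (L : List α) :
    rankingAux E (moveLast t τ) L {v} = rankingAux E τ L {v} := by
  refine rankingAux_congr L {v} fun w hw w' hw' => ?_
  have hτw : τ w ≠ last n := hτ ▸ τ.injective.ne (by simpa using hw)
  have hτw' : τ w' ≠ last n := hτ ▸ τ.injective.ne (by simpa using hw')
  rw [Fin.le_def, Fin.le_def, moveLast_apply_val hτw, moveLast_apply_val hτw']
  simp only [Fin.lt_def]
  split_ifs <;> omega

/-- The threshold `θ` is the `τ`-rank of the partner of `x` once `v` is removed (`last n` if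
there is none). -/
lemma exists_threshold (hτ : τ v = last n) (hL : L.Nodup) {x : α} (hx : x ∈ L)
    (hxv : E x v = true) :
    ∃ θ : Fin (n + 1),
      (θ < last n → ∀ t, ∃ w, (x, w) ∈ rankingAux E (moveLast t τ) L ∅ ∧
        (moveLast t τ w : ℕ) ≤ θ + 1) ∧
      ∀ t ≤ θ, ∃ y, (y, v) ∈ rankingAux E (moveLast t τ) L ∅ := by
  -- If `v` stays unmatched, Ranking runs as if `v` were removed, and `x` gets a partner ranked
  -- before `v`.
  have hunmatched : ∀ t, (∀ q ∈ rankingAux E (moveLast t τ) L ∅, q.2 ≠ v) →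
      ∃ w, (x, w) ∈ rankingAux E τ L {v} ∧ moveLast t τ w < t := by
    intro t hv
    obtain ⟨w, hw, hlt⟩ := exists_mem_rankingAux_lt_of_forall_ne hv (notMem_empty v) hx hxv
    rw [← rankingAux_insert_of_forall_ne L ∅ hv, insert_empty, rankingAux_moveLast_singleton hτ]
      at hw
    exact ⟨w, hw, by rwa [moveLast_apply_of_eq_last hτ] at hlt⟩
  by_cases hmatched : ∃ w, (x, w) ∈ rankingAux E τ L {v}
  · obtain ⟨w, hw⟩ := hmatched
    have hτw : τ w ≠ last n := hτ ▸ τ.injective.ne (by simpa using notMem_of_mem_rankingAux hw)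
    refine ⟨τ w, fun _ t => ?_, fun t ht => ?_⟩
    · rw [← rankingAux_moveLast_singleton hτ t, ← insert_empty] at hw
      obtain ⟨w₁, hw₁, hle⟩ := exists_mem_rankingAux_le_of_mem_insert_s13 L ∅ v hw
      refine ⟨w₁, hw₁, ?_⟩
      have := moveLast_apply_val (t := t) hτw
      rw [Fin.le_def] at hle
      split_ifs at this <;> omega
    · by_contra! hv
      obtain ⟨w', hw', hlt⟩ := hunmatched t fun q hq hqv => hv q.1 (hqv ▸ hq)
      rw [eq_of_mem_rankingAux hL hw' hw] at hlt
      have := moveLast_apply_val (t := t) hτw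
      rw [Fin.lt_def] at hlt
      rw [Fin.le_def] at ht
      split_ifs at this <;> omega
  · refine ⟨last n, fun h => absurd h (lt_irrefl _), fun t _ => ?_⟩
    by_contra! hv
    obtain ⟨w, hw, -⟩ := hunmatched t fun q hq hqv => hv q.1 (hqv ▸ hq)
    exact hmatched ⟨w, hw⟩

variable [DecidableEq α] {k : ℕ} {U : Finset α}

lemma sub_two_le_sum_edgeGain_moveLast (hk : 1 ≤ k) (hτ : τ v = last n) (hL : L.Nodup)
    (hUk : U.card = k) (hU : ∀ x ∈ U, x ∈ L ∧ E x v = true) :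
    (n + 1) * (k * (1 - Real.exp (-1 / k))) - 2 ≤
      ∑ t, edgeGain (fun w => weight k n (moveLast t τ w))
        (rankingAux E (moveLast t τ) L ∅).toFinset U v := by
  have hUne : U.Nonempty := card_pos.mp (hUk ▸ hk)
  choose! θ hθ using fun x (hx : x ∈ U) => exists_threshold hτ hL (hU x hx).1 (hU x hx).2
  set R := U.sup' hUne θ
  obtain ⟨x₀, hx₀, hRx₀⟩ := exists_mem_eq_sup' hUne θ
  have hgain (t : Fin (n + 1)) :
      k * (1 - weight k n (R + 1)) + (if (t : ℕ) ≤ R then weight k n t else 0) ≤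
        edgeGain (fun w => weight k n (moveLast t τ w))
          (rankingAux E (moveLast t τ) L ∅).toFinset U v := by
    rw [← hUk]
    refine le_edgeGain (fun _ => weight_nonneg _) (fun w => weight_le_one (is_le _)) ?_ ?_
    · intro x hx
      by_cases hθx : θ x < last n
      · obtain ⟨w, hw, hle⟩ := (hθ x hx).1 hθx t
        have hθR : θ x ≤ R := le_sup' θ hx
        rw [Fin.le_def] at hθR
        exact Or.inr ⟨w, List.mem_toFinset.mpr hw,
          sub_le_sub_left (weight_mono (by omega)) 1⟩
      · have hθR : θ x ≤ R := le_sup' θ hx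
        rw [not_lt] at hθx
        rw [Fin.le_def] at hθR hθx
        rw [val_last] at hθx
        exact Or.inl (sub_nonpos.mpr (one_le_weight (by omega)))
    · split_ifs with htR
      · obtain ⟨y, hy⟩ := (hθ x₀ hx₀).2 t (by rw [← hRx₀, Fin.le_def]; exact htR)
        exact Or.inr ⟨⟨y, List.mem_toFinset.mpr hy⟩, by rw [moveLast_apply_of_eq_last hτ]⟩
      · exact Or.inl le_rfl
  calc (n + 1) * (k * (1 - Real.exp (-1 / k))) - 2
      ≤ (n + 1) * (k * (1 - weight k n (R + 1))) + ∑ j ∈ range (R + 1), weight k n j :=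
        sub_two_le_weight_gain hk (is_le R)
    _ = ∑ t : Fin (n + 1), (k * (1 - weight k n (R + 1)) +
          if (t : ℕ) ≤ R then weight k n t else 0) := by
        rw [sum_add_distrib, Finset.sum_const, card_univ, Fintype.card_fin, nsmul_eq_mul,
          Fin.sum_univ_eq_sum_range (fun j => if j ≤ (R : ℕ) then weight k n j else 0),
          ← sum_filter]
        congr 2
        · push_cast; ring
        · ext j; simp only [mem_range, mem_filter]; omega
    _ ≤ _ := sum_le_sum fun t _ => hgain t

lemma card_mul_le_sum_edgeGain (hk : 1 ≤ k) (hL : L.Nodup) (hUk : U.card = k)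
    (hU : ∀ x ∈ U, x ∈ L ∧ E x v = true) :
    (Fintype.card (Perm (Fin (n + 1))) : ℝ) * (k * (1 - Real.exp (-1 / k)) - 2 / (n + 1)) ≤
      ∑ σ, edgeGain (fun w => weight k n (σ w)) (rankingAux E σ L ∅).toFinset U v := by
  rw [← nsmul_eq_mul, ← card_univ, ← Finset.sum_const, sum_perm_eq_sum_moveLast v,
    sum_perm_eq_sum_moveLast v]
  refine sum_le_sum fun τ hτ => ?_
  have hsum := sub_two_le_sum_edgeGain_moveLast (E := E) hk (mem_filter.mp hτ).2 hL hUk hU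
  have : ∑ _t : Fin (n + 1), ((k : ℝ) * (1 - Real.exp (-1 / k)) - 2 / (n + 1)) =
      (n + 1) * (k * (1 - Real.exp (-1 / k))) - 2 := by
    rw [Finset.sum_const, card_univ, Fintype.card_fin, nsmul_eq_mul]
    field_simp
    push_cast
    ring
  linarith

end Threshold

end Ranking

open Finset Ranking

lemma IsMatchingSet.card_le {nU nV : ℕ} {E : Fin nU → Fin nV → Bool}
    {S : Finset (Fin nU × Fin nV)} (hS : IsMatchingSet E S) : S.card ≤ nV := by
  simpa using card_le_card_of_injOn Prod.snd (fun _ _ => mem_coe.mpr (mem_univ _))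
    fun e he e' he' => hS.2.2 e he e' he'

theorem card_mul_le_rankExpSize {k nU nH n : ℕ} (hk : 1 ≤ k)
    {EG : Fin nU → Fin (n + 1) → Bool} {M : Finset (Fin nU × Fin (n + 1))}
    (hM : IsMatchingSet EG M) {ζ : Fin nH → Fin nU}
    (hζ : ∀ u, (univ.filter fun x => ζ x = u).card = k) {EH : Fin nH → Fin (n + 1) → Bool}
    (hEH : ∀ x v, EH x v = EG (ζ x) v) (π : Equiv.Perm (Fin nH)) :
    M.card * (k * (1 - Real.exp (-1 / k)) - 2 / (n + 1)) ≤ rankExpSize EH π := by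
  obtain ⟨hMadj, hMfst, hMsnd⟩ := hM
  set L := (List.finRange nH).map π.symm
  have hL : L.Nodup := (List.nodup_finRange nH).map π.symm.injective
  set fiber : Fin nU → Finset (Fin nH) := fun u => univ.filter fun x => ζ x = u
  set gain : Fin nU × Fin (n + 1) → Equiv.Perm (Fin (n + 1)) → ℝ := fun e σ =>
    edgeGain (fun w => weight k n (σ w)) (rankingAux EH σ L ∅).toFinset (fiber e.1) e.2
  have hlength (σ) : ∑ e ∈ M, gain e σ ≤ (ranking EH π σ).length := by
    rw [ranking, ← List.toFinset_card_of_nodup (nodup_rankingAux hL ∅)]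
    refine sum_edgeGain_le_card (fun _ => weight_nonneg _) (fun w => weight_le_one (Fin.is_le _))
      _ M (fun e => fiber e.1) Prod.snd ?_ fun e he e' he' => hMsnd e he e' he'
    intro e he e' he' hne
    refine disjoint_left.mpr fun x hx hx' => hne (hMfst e he e' he' ?_)
    exact (mem_filter.mp hx).2.symm.trans (mem_filter.mp hx').2
  have hedge : ∀ e ∈ M, (Fintype.card (Equiv.Perm (Fin (n + 1))) : ℝ) *
      (k * (1 - Real.exp (-1 / k)) - 2 / (n + 1)) ≤ ∑ σ, gain e σ := fun e he =>
    card_mul_le_sum_edgeGain hk hL (hζ e.1) fun x hx =>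
      ⟨List.mem_map.mpr ⟨π x, List.mem_finRange _, π.symm_apply_apply x⟩,
        by rw [hEH, (mem_filter.mp hx).2, hMadj e he]⟩
  rw [rankExpSize, le_div_iff₀ (by positivity)]
  calc M.card * (k * (1 - Real.exp (-1 / k)) - 2 / (n + 1)) *
        (Fintype.card (Equiv.Perm (Fin (n + 1))) : ℝ)
      = ∑ e ∈ M, (Fintype.card (Equiv.Perm (Fin (n + 1))) : ℝ) *
          (k * (1 - Real.exp (-1 / k)) - 2 / (n + 1)) := by
        rw [Finset.sum_const, nsmul_eq_mul]
        ring
    _ ≤ ∑ e ∈ M, ∑ σ, gain e σ := sum_le_sum hedge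
    _ = ∑ σ, ∑ e ∈ M, gain e σ := sum_comm
    _ ≤ ∑ σ, ((ranking EH π σ).length : ℝ) := sum_le_sum fun σ _ => hlength σ

/-- let `G` have maximum matching size `OPT` and let `H` be a left
`k`-copy of `G`. Then Ranking on `H` with a uniformly random ranking of the bidders
produces a matching of expected size at least `k · OPT · (1 − e^{−1/k} + o(1))`
(the `o(1)` term being uniform over all instances with `OPT` large enough). -/
theorem ranking_kcopy_expected_size (k : ℕ) (hk : 1 ≤ k) :
    ∀ ε : ℝ, 0 < ε → ∃ N : ℕ,
      ∀ (nU nV nH OPT : ℕ) (EG : Fin nU → Fin nV → Bool)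
        (_ : IsGreatest {s | ∃ S, IsMatchingSet EG S ∧ S.card = s} OPT)
        (ζ : Fin nH → Fin nU)
        (_ : ∀ u : Fin nU, (Finset.univ.filter fun x => ζ x = u).card = k)
        (EH : Fin nH → Fin nV → Bool)
        (_ : ∀ x v, EH x v = EG (ζ x) v)
        (π : Equiv.Perm (Fin nH)),
        N ≤ OPT →
        (k : ℝ) * OPT * (1 - Real.exp (-1 / (k : ℝ)) - ε) ≤ rankExpSize EH π := by
  intro ε hε
  refine ⟨⌈2 / ε⌉₊ + 1, fun nU nV nH OPT EG hOPT ζ hζ EH hEH π hN => ?_⟩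
  obtain ⟨⟨M, hM, rfl⟩, -⟩ := hOPT
  obtain ⟨n, rfl⟩ : ∃ n, nV = n + 1 := Nat.exists_eq_add_one.mpr (by have := hM.card_le; omega)
  refine le_trans ?_ (card_mul_le_rankExpSize hk hM hζ hEH π)
  have hMn : (M.card : ℝ) ≤ n + 1 := by exact_mod_cast hM.card_le
  have hNM : 2 / ε < M.card := by
    have : (⌈2 / ε⌉₊ + 1 : ℝ) ≤ M.card := by exact_mod_cast hN
    linarith [Nat.le_ceil (2 / ε)]
  have herr : 2 / ((n : ℝ) + 1) ≤ k * ε := calc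
    2 / ((n : ℝ) + 1) ≤ ε := by
      rw [div_lt_iff₀ hε] at hNM
      rw [div_le_iff₀ (by positivity)]
      nlinarith
    _ ≤ k * ε := le_mul_of_one_le_left hε.le (Nat.one_le_cast.mpr hk)
  nlinarith [(M.card.cast_nonneg : (0 : ℝ) ≤ M.card)]
end

section
/- Fix a ranking σ of V. For each bidder v, let X_v ∈ {0,1} indicate whether v is matched by Ranking on the left 2-copy H of G (with arrival order duplicating each keyword consecutively), and let X'_v indicate whether v is matched by RankingSimulate on G with the same σ. Then E[X'_v] = X_v / 2. -/
/-- One run of RankingSimulate with coin flips `c`: process the keywords in the given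
arrival list, maintaining matched bidders `M` and reserved bidders `R`; an arriving
keyword with available neighbors (not in `M ∪ R`) takes the two lowest-ranked ones
`v₁, v₂` (or the single one) and, according to the coin, matches one and reserves the
other. Returns the list of matches made. -/
def rsAux {p : ℕ} {α : Type*} (E : α → Fin p → Bool) (σ : Equiv.Perm (Fin p))
    (c : α → Bool) : List α → Finset (Fin p) → Finset (Fin p) → List (α × Fin p)
  | [], _, _ => []
  | u :: rest, M, R =>
    let cand : Finset (Fin p) :=
      Finset.univ.filter fun r => E u (σ.symm r) = true ∧ σ.symm r ∉ M ∧ σ.symm r ∉ R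
    if h : cand.Nonempty then
      let r1 := cand.min' h
      let v1 := σ.symm r1
      if h2 : (cand.erase r1).Nonempty then
        let v2 := σ.symm ((cand.erase r1).min' h2)
        if c u then (u, v1) :: rsAux E σ c rest (insert v1 M) (insert v2 R)
        else (u, v2) :: rsAux E σ c rest (insert v2 M) (insert v1 R)
      else
        if c u then (u, v1) :: rsAux E σ c rest (insert v1 M) R
        else rsAux E σ c rest M (insert v1 R)
    else rsAux E σ c rest M R

/-- The matches made by RankingSimulate on the graph `E` (keywords `Fin nG` arriving
in index order) with ranking `σ` and coin flips `c`. -/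
def rsRun {nG p : ℕ} (E : Fin nG → Fin p → Bool) (σ : Equiv.Perm (Fin p))
    (c : Fin nG → Bool) : List (Fin nG × Fin p) :=
  rsAux E σ c (List.finRange nG) ∅ ∅

/-- The left 2-copy of `E`, with the two copies of each keyword arriving
consecutively: the arrival list of its keywords. -/
def twoCopyList (nG : ℕ) : List (Fin nG × Bool) :=
  (List.finRange nG).flatMap fun u => [(u, false), (u, true)]

/-- The matching produced by Ranking on the left 2-copy of `E` (copies of each keyword
arrive consecutively) with bidder ranking `σ`. -/
def ranking2Copy {nG p : ℕ} (E : Fin nG → Fin p → Bool) (σ : Equiv.Perm (Fin p)) :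
    List ((Fin nG × Bool) × Fin p) :=
  rankingAux (fun (u : Fin nG × Bool) v => E u.1 v) σ (twoCopyList nG) ∅

/-! Feeding both copies of a keyword `u` of the 2-copy to Ranking matches `(u, false)` to the
lowest-ranked available bidder `v₁` and `(u, true)` to the next one `v₂`, which are exactly the two
bidders RankingSimulate looks at. The coin `c u` keeps the match of the copy `(u, !c u)` and puts
the other bidder in `R`, so `M ∪ R` evolves as Ranking's matched set on the 2-copy and
RankingSimulate's matches are those of Ranking on the 2-copy with the unselected copies filtered
out. Ranking matches `v` at most once, to a copy `(u, b)`, so `v` is matched by RankingSimulate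
exactly when `c u = !b`, an event of probability `1 / 2`. -/

open Finset

section Ranking

variable {α : Type*} {p : ℕ} (E : α → Fin p → Bool) (σ : Equiv.Perm (Fin p))

theorem notMem_of_mem_rankingAux_snd (L : List α) (matched : Finset (Fin p)) {w : Fin p}
    (hw : w ∈ (rankingAux E σ L matched).map Prod.snd) : w ∉ matched := by
  induction L generalizing matched with
  | nil => simp [rankingAux] at hw
  | cons u rest ih =>
    rw [rankingAux] at hw
    split_ifs at hw with h
    · rcases List.mem_cons.1 hw with rfl | hw
      · exact (mem_filter.1 (min'_mem _ h)).2.2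
      · exact fun hwm => ih _ hw (mem_insert_of_mem hwm)
    · exact ih matched hw

theorem rankingAux_snd_nodup (L : List α) (matched : Finset (Fin p)) :
    ((rankingAux E σ L matched).map Prod.snd).Nodup := by
  induction L generalizing matched with
  | nil => simp [rankingAux]
  | cons u rest ih =>
    rw [rankingAux]
    split_ifs
    · exact List.nodup_cons.2
        ⟨fun hmem => notMem_of_mem_rankingAux_snd E σ _ _ hmem (mem_insert_self _ _), ih _⟩
    · exact ih matched

theorem eq_of_mem_rankingAux_of_snd_eq (L : List α) (matched : Finset (Fin p))
    {x y : α × Fin p} (hx : x ∈ rankingAux E σ L matched) (hy : y ∈ rankingAux E σ L matched)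
    (hxy : x.2 = y.2) : x = y :=
  List.inj_on_of_nodup_map (rankingAux_snd_nodup E σ L matched) hx hy hxy

theorem rsAux_eq_rankingAux_twoCopies (c : α → Bool) (L : List α) (M R : Finset (Fin p)) :
    rsAux E σ c L M R =
      ((rankingAux (fun x v => E x.1 v) σ (L.flatMap fun u => [(u, false), (u, true)])
        (M ∪ R)).filter fun x => c x.1.1 = !x.1.2).map fun x => (x.1.1, x.2) := by
  induction L generalizing M R with
  | nil => simp [rsAux, rankingAux]
  | cons u rest ih =>
    rw [List.flatMap_cons, List.cons_append, List.cons_append, List.nil_append, rsAux, rankingAux]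
    set cand := univ.filter fun r => E u (σ.symm r) = true ∧ σ.symm r ∉ M ∧ σ.symm r ∉ R
    have hcand : (univ.filter fun r =>
        (fun (x : α × Bool) w => E x.1 w) (u, false) (σ.symm r) = true ∧ σ.symm r ∉ M ∪ R) =
          cand := by
      simp only [cand, mem_union, not_or]
    rw [hcand]
    by_cases h : cand.Nonempty
    · rw [dif_pos h, dif_pos h, rankingAux]
      have hcand' : (univ.filter fun r => (fun (x : α × Bool) w => E x.1 w) (u, true) (σ.symm r) = true ∧
          σ.symm r ∉ insert (σ.symm (cand.min' h)) (M ∪ R)) = cand.erase (cand.min' h) := by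
        ext r
        simp only [cand, mem_filter, mem_univ, true_and, mem_erase, mem_insert, mem_union,
          σ.symm.injective.eq_iff]
        tauto
      rw [hcand']
      by_cases h2 : (cand.erase (cand.min' h)).Nonempty
      · rw [dif_pos h2, dif_pos h2]
        cases hc : c u <;> simp [hc, ih, insert_union, union_insert, insert_comm]
      · rw [dif_neg h2, dif_neg h2]
        cases hc : c u <;> simp [hc, ih, insert_union, union_insert]
    · rw [dif_neg h, dif_neg h, rankingAux, hcand, dif_neg h, ih]

end Ranking

theorem mem_rsRun_snd_iff {nG p : ℕ} (E : Fin nG → Fin p → Bool) (σ : Equiv.Perm (Fin p))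
    (c : Fin nG → Bool) (v : Fin p) :
    v ∈ (rsRun E σ c).map Prod.snd ↔ ∃ u b, ((u, b), v) ∈ ranking2Copy E σ ∧ c u = !b := by
  simp [rsRun, ranking2Copy, twoCopyList, rsAux_eq_rankingAux_twoCopies]

theorem card_filter_apply_eq_div_two_pow_card {ι : Type*} [Fintype ι] [DecidableEq ι] (i : ι) (b : Bool) :
    (#{c : ι → Bool | c i = b} : ℝ) / 2 ^ Fintype.card ι = 1 / 2 := by
  have hcard := Fintype.card_filter_piFinset_const_eq_of_mem (univ : Finset Bool) i (mem_univ b)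
  rw [Fintype.piFinset_univ] at hcard
  obtain ⟨n, hn⟩ := Nat.exists_eq_succ_of_ne_zero (Fintype.card_pos_iff.2 ⟨i⟩).ne'
  rw [hcard, hn]
  field_simp
  simp [pow_succ]

/-- fix a ranking `σ`. For each bidder `v`, the probability over the
coin flips that `v` is matched by RankingSimulate on `G` equals half the indicator
that `v` is matched by Ranking on the left 2-copy `H` of `G` with the same `σ`. -/
theorem rankingSimulate_half_of_two_copy {nG p : ℕ}
    (E : Fin nG → Fin p → Bool) (σ : Equiv.Perm (Fin p)) (v : Fin p) :
    ((Finset.univ.filter fun c : Fin nG → Bool =>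
        v ∈ (rsRun E σ c).map Prod.snd).card : ℝ) / 2 ^ nG =
      (if v ∈ (ranking2Copy E σ).map Prod.snd then (1 : ℝ) else 0) / 2 := by
  by_cases hv : v ∈ (ranking2Copy E σ).map Prod.snd
  · obtain ⟨u, b, hub⟩ : ∃ u b, ((u, b), v) ∈ ranking2Copy E σ := by simpa using hv
    have hcoins : (univ.filter fun c : Fin nG → Bool => v ∈ (rsRun E σ c).map Prod.snd) =
        univ.filter fun c : Fin nG → Bool => c u = !b := by
      ext c
      simp only [mem_filter, mem_univ, true_and, mem_rsRun_snd_iff]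
      constructor
      · rintro ⟨u', b', hub', hc⟩
        cases eq_of_mem_rankingAux_of_snd_eq _ σ _ _ hub' hub rfl
        exact hc
      · exact fun hc => ⟨u, b, hub, hc⟩
    rw [if_pos hv, hcoins]
    simpa using card_filter_apply_eq_div_two_pow_card u (!b)
  · have hnever (c : Fin nG → Bool) : v ∉ (rsRun E σ c).map Prod.snd := fun hc => by
      obtain ⟨u, b, hub, -⟩ := (mem_rsRun_snd_iff E σ c v).1 hc
      exact hv (List.mem_map_of_mem hub)
    simp [hv, hnever]
end

section
/- Given a 3-SAT instance with variables x_1,…,x_n and clauses c_1,…,c_k, the constructed Second-Price Matching instance (with n variable keywords arriving first, each adjacent to its two assignment bidders v_i^t, v_i^f, followed by k clause keywords u_j, each adjacent to its clause bidder b_j and to the assignment bidders of the negations of its three literals) admits a second-price matching of value n + k if and only if the 3-SAT formula is satisfiable. Consequently, Second-Price Matching is NP-hard. -/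
/-- The 2PM instance constructed from a 3-SAT instance with `n` variables and `k`
clauses (clause `j` has literals `C j l = (variable, polarity)`): the `n` variable
keywords arrive first (keyword `i` adjacent to the assignment bidders `(i, true)` and
`(i, false)`), followed by the `k` clause keywords (keyword `j` adjacent to its clause
bidder `Sum.inr j` and, for each literal `(i, pol)` of clause `j`, to the assignment
bidder `(i, !pol)`). -/
def satAdj (n k : ℕ) (C : Fin k → Fin 3 → Fin n × Bool) :
    Fin (n + k) → ((Fin n × Bool) ⊕ Fin k) → Prop := fun t b =>
  (∃ i : Fin n, (t : ℕ) = (i : ℕ) ∧ ∃ bb : Bool, b = Sum.inl (i, bb)) ∨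
  (∃ j : Fin k, (t : ℕ) = n + (j : ℕ) ∧
    (b = Sum.inr j ∨ ∃ l : Fin 3, b = Sum.inl ((C j l).1, !(C j l).2)))

/-!
A satisfying assignment `a` gives the matching sending variable keyword `i` to `(i, a i)` and
clause keyword `j` to its clause bidder: the bidders `(i, !a i)` stay unmatched throughout, and
every clause keyword has one of them as a second neighbour because some literal of the clause is
true. Conversely, if all `n + k` keywords are profitable, each variable keyword `i` takes a bidder
`(i, a i)`, and the second neighbour witnessing profit of clause keyword `j` — or, if that is its
clause bidder, the bidder it is matched to — is a literal bidder `(i, !pol)` not taken by the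
earlier variable keyword `i`, so `a i = pol`.
-/

namespace Fin

theorem castAdd_lt_natAdd {m n : ℕ} (i : Fin m) (j : Fin n) : castAdd n i < natAdd m j := by
  simp only [lt_def, val_castAdd, val_natAdd]
  omega

end Fin

open Fin

theorem spmValue_eq_iff_forall_profitable {m : ℕ} {V : Type*} (adj : Fin m → V → Prop)
    (g : Fin m → Option V) : spmValue adj g = m ↔ ∀ u, Profitable adj g u := by
  classical
  have hcard := Finset.card_eq_iff_eq_univ (Finset.univ.filter (Profitable adj g))
  rw [Fintype.card_fin] at hcard
  rw [spmValue, hcard, Finset.filter_eq_self]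
  simp only [Finset.mem_univ, true_implies]

theorem IsPartialMatching.exists_adj_of_profitable {m : ℕ} {V : Type*} {adj : Fin m → V → Prop}
    {g : Fin m → Option V} (hg : IsPartialMatching adj g) {u : Fin m}
    (hu : Profitable adj g u) : ∃ v, g u = some v ∧ adj u v := by
  obtain ⟨v, -, hv, -⟩ := hu
  exact ⟨v, hv, hg.1 u v hv⟩

section SatReduction

variable {n k : ℕ} {C : Fin k → Fin 3 → Fin n × Bool}

theorem satAdj_castAdd_iff {i : Fin n} {b : (Fin n × Bool) ⊕ Fin k} :
    satAdj n k C (castAdd k i) b ↔ ∃ bb, b = Sum.inl (i, bb) := by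
  constructor
  · rintro (⟨i', hi, hb⟩ | ⟨j, hj, -⟩)
    · obtain rfl : i = i' := Fin.ext (by simpa using hi)
      exact hb
    · simp only [val_castAdd] at hj
      omega
  · exact fun hb => Or.inl ⟨i, rfl, hb⟩

theorem satAdj_natAdd_iff {j : Fin k} {b : (Fin n × Bool) ⊕ Fin k} :
    satAdj n k C (natAdd n j) b ↔
      b = Sum.inr j ∨ ∃ l, b = Sum.inl ((C j l).1, !(C j l).2) := by
  constructor
  · rintro (⟨i, hi, -⟩ | ⟨j', hj, hb⟩)
    · simp only [val_natAdd] at hi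
      omega
    · obtain rfl : j = j' := Fin.ext (by simpa using hj)
      exact hb
  · exact fun hb => Or.inr ⟨j, rfl, hb⟩

theorem IsPartialMatching.exists_literal_of_profitable_natAdd
    {g : Fin (n + k) → Option ((Fin n × Bool) ⊕ Fin k)} (hg : IsPartialMatching (satAdj n k C) g)
    {j : Fin k} (hj : Profitable (satAdj n k C) g (natAdd n j)) :
    ∃ l, g (castAdd k (C j l).1) ≠ some (Sum.inl ((C j l).1, !(C j l).2)) := by
  obtain ⟨v, v', hv, hne, hadj', hfree⟩ := hj
  rcases satAdj_natAdd_iff.1 hadj' with rfl | ⟨l, rfl⟩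
  · rcases satAdj_natAdd_iff.1 (hg.1 _ v hv) with rfl | ⟨l, rfl⟩
    · exact absurd rfl hne
    · exact ⟨l, fun h => (castAdd_lt_natAdd _ _).ne (hg.2 _ _ _ h hv)⟩
  · exact ⟨l, hfree _ (castAdd_lt_natAdd _ _).le⟩

variable (n k) in
def assignmentMatching (a : Fin n → Bool) : Fin (n + k) → Option ((Fin n × Bool) ⊕ Fin k) :=
  addCases (fun i => some (Sum.inl (i, a i))) (fun j => some (Sum.inr j))

@[simp]
theorem assignmentMatching_castAdd (a : Fin n → Bool) (i : Fin n) :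
    assignmentMatching n k a (castAdd k i) = some (Sum.inl (i, a i)) :=
  addCases_left i

@[simp]
theorem assignmentMatching_natAdd (a : Fin n → Bool) (j : Fin k) :
    assignmentMatching n k a (natAdd n j) = some (Sum.inr j) :=
  addCases_right j

theorem assignmentMatching_ne_some_inl_not (a : Fin n → Bool) (u : Fin (n + k)) (i : Fin n) :
    assignmentMatching n k a u ≠ some (Sum.inl (i, !a i)) := by
  induction u using addCases with
  | left i' =>
    simp only [assignmentMatching_castAdd, ne_eq, Option.some.injEq, Sum.inl.injEq,
      Prod.mk.injEq, not_and]
    rintro rfl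
    simp
  | right j => simp

theorem isPartialMatching_assignmentMatching (a : Fin n → Bool) :
    IsPartialMatching (satAdj n k C) (assignmentMatching n k a) := by
  constructor
  · intro u v hv
    induction u using addCases with
    | left i =>
      rw [assignmentMatching_castAdd, Option.some.injEq] at hv
      exact satAdj_castAdd_iff.2 ⟨a i, hv.symm⟩
    | right j =>
      rw [assignmentMatching_natAdd, Option.some.injEq] at hv
      exact satAdj_natAdd_iff.2 (Or.inl hv.symm)
  · intro u u' v hu hu'
    have h := hu.trans hu'.symm
    clear hu hu'
    induction u using addCases <;> induction u' using addCases <;> simp_all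

theorem profitable_assignmentMatching {a : Fin n → Bool}
    (ha : ∀ j, ∃ l, a (C j l).1 = (C j l).2) (u : Fin (n + k)) :
    Profitable (satAdj n k C) (assignmentMatching n k a) u := by
  induction u using addCases with
  | left i =>
    refine ⟨_, Sum.inl (i, !a i), assignmentMatching_castAdd a i, by simp,
      satAdj_castAdd_iff.2 ⟨_, rfl⟩, fun u' _ => assignmentMatching_ne_some_inl_not a u' i⟩
  | right j =>
    obtain ⟨l, hl⟩ := ha j
    refine ⟨_, Sum.inl ((C j l).1, !(C j l).2), assignmentMatching_natAdd a j, by simp,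
      satAdj_natAdd_iff.2 (Or.inr ⟨l, rfl⟩), fun u' _ => ?_⟩
    rw [← hl]
    exact assignmentMatching_ne_some_inl_not a u' _

end SatReduction

/-- the constructed Second-Price Matching instance admits a second-price
matching of value `n + k` if and only if the 3-SAT formula is satisfiable
(consequently, Second-Price Matching is NP-hard). -/
theorem satisfiable_iff_spm_value (n k : ℕ) (C : Fin k → Fin 3 → Fin n × Bool) :
    (∃ g, IsPartialMatching (satAdj n k C) g ∧ spmValue (satAdj n k C) g = n + k) ↔
      (∃ a : Fin n → Bool, ∀ j : Fin k, ∃ l : Fin 3, a (C j l).1 = (C j l).2) := by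
  constructor
  · rintro ⟨g, hg, hval⟩
    have hprof := (spmValue_eq_iff_forall_profitable _ g).1 hval
    have hvar (i : Fin n) : ∃ bb, g (castAdd k i) = some (Sum.inl (i, bb)) := by
      obtain ⟨v, hv, hadj⟩ := hg.exists_adj_of_profitable (hprof (castAdd k i))
      obtain ⟨bb, rfl⟩ := satAdj_castAdd_iff.1 hadj
      exact ⟨bb, hv⟩
    choose a ha using hvar
    refine ⟨a, fun j => ?_⟩
    obtain ⟨l, hl⟩ := hg.exists_literal_of_profitable_natAdd (hprof (natAdd n j))
    refine ⟨l, by_contra fun hne => hl ?_⟩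
    rw [← Bool.eq_not_iff.2 hne]
    exact ha _
  · rintro ⟨a, ha⟩
    exact ⟨assignmentMatching n k a, isPartialMatching_assignmentMatching a,
      (spmValue_eq_iff_forall_profitable _ _).2 (profitable_assignmentMatching ha)⟩
end

section
/- In the reduction from Vertex Cover to Second-Price Matching: for a graph G, the instance f(G) (edge keywords e with bidders {endpoints of e} ∪ {x_e}, and for each vertex v a gadget with keywords h_v, l_v and bidders y_v, z_v, where v and y_v bid for h_v and y_v, z_v bid for l_v; gadget keywords arrive before edge keywords with h_v before l_v) satisfies OPT_{2P}(f(G)) = 2|V(G)| + |E(G)| − OPT_{VC}(G), where OPT_{VC} is the minimum vertex cover size of G and OPT_{2P} the maximum second-price matching value. -/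
/-- The 2PM instance `f(G)` constructed from a graph `G` given by `N` vertices and an
edge list `Eend : Fin M → Fin N × Fin N`. Bidders: vertex bidders `Sum.inl v`, private
edge bidders `x_e = Sum.inr (Sum.inl e)`, gadget bidders `y_v = Sum.inr (Sum.inr (v,
false))` and `z_v = Sum.inr (Sum.inr (v, true))`. Keywords arrive as: for each vertex
`v`, gadget keyword `h_v` at time `2v` (adjacent to `v` and `y_v`), then `l_v` at time
`2v + 1` (adjacent to `y_v` and `z_v`); afterwards the edge keywords, edge `e` at time
`2N + e`, adjacent to its two endpoints and to `x_e`. -/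
def vcAdj (N M : ℕ) (Eend : Fin M → Fin N × Fin N) :
    Fin (2 * N + M) → (Fin N ⊕ (Fin M ⊕ Fin N × Bool)) → Prop := fun t b =>
  (∃ v : Fin N, (t : ℕ) = 2 * (v : ℕ) ∧
    (b = Sum.inl v ∨ b = Sum.inr (Sum.inr (v, false)))) ∨
  (∃ v : Fin N, (t : ℕ) = 2 * (v : ℕ) + 1 ∧
    (b = Sum.inr (Sum.inr (v, false)) ∨ b = Sum.inr (Sum.inr (v, true)))) ∨
  (∃ e : Fin M, (t : ℕ) = 2 * N + (e : ℕ) ∧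
    (b = Sum.inl (Eend e).1 ∨ b = Sum.inl (Eend e).2 ∨ b = Sum.inr (Sum.inl e)))

/-- `S` is a vertex cover of the graph given by the edge list `Eend`. -/
def IsVC {N M : ℕ} (Eend : Fin M → Fin N × Fin N) (S : Finset (Fin N)) : Prop :=
  ∀ e : Fin M, (Eend e).1 ∈ S ∨ (Eend e).2 ∈ S

open Finset

open scoped Classical in
theorem spmValue_add_card_filter_not_profitable {m : ℕ} {V : Type*} (adj : Fin m → V → Prop)
    (g : Fin m → Option V) :
    spmValue adj g + #{u | ¬Profitable adj g u} = m := by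
  rw [spmValue, card_filter_add_card_filter_not, card_univ, Fintype.card_fin]

abbrev Bidder (N M : ℕ) := Fin N ⊕ (Fin M ⊕ Fin N × Bool)

-- `(v, false)` is `h_v`, `(v, true)` is `l_v`, and `e` is the keyword of edge `e`.
def keyEquiv (N M : ℕ) : Fin N × Bool ⊕ Fin M ≃ Fin (2 * N + M) :=
  (Equiv.sumCongr
    (((Equiv.refl _).prodCongr finTwoEquiv.symm).trans
      (finProdFinEquiv.trans (finCongr (mul_comm N 2))))
    (Equiv.refl _)).trans finSumFinEquiv

theorem keyEquiv_inl_val (N M : ℕ) (v : Fin N) (l : Bool) :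
    (keyEquiv N M (.inl (v, l)) : ℕ) = 2 * v + l.toNat := by
  cases l <;> simp [keyEquiv, finProdFinEquiv, finTwoEquiv]; ring

theorem keyEquiv_inr_val (N M : ℕ) (e : Fin M) :
    (keyEquiv N M (.inr e) : ℕ) = 2 * N + e := by
  simp [keyEquiv]

section Reduction

variable {N M : ℕ} (Eend : Fin M → Fin N × Fin N)

def keyAdj : Fin N × Bool ⊕ Fin M → Bidder N M → Prop
  | .inl (v, false), b => b = .inl v ∨ b = .inr (.inr (v, false))
  | .inl (v, true), b => b = .inr (.inr (v, false)) ∨ b = .inr (.inr (v, true))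
  | .inr e, b => b = .inl (Eend e).1 ∨ b = .inl (Eend e).2 ∨ b = .inr (.inl e)

theorem vcAdj_keyEquiv (k : Fin N × Bool ⊕ Fin M) (b : Bidder N M) :
    vcAdj N M Eend (keyEquiv N M k) b ↔ keyAdj Eend k b := by
  rcases k with ⟨v, _ | _⟩ | e <;>
    simp only [vcAdj, keyAdj, keyEquiv_inl_val, keyEquiv_inr_val, Bool.toNat_false,
      Bool.toNat_true] <;>
    grind

def coverAssign (S : Finset (Fin N)) : Fin N × Bool ⊕ Fin M → Bidder N M
  | .inl (v, false) => if v ∈ S then .inr (.inr (v, false)) else .inl v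
  | .inl (v, true) => if v ∈ S then .inr (.inr (v, true)) else .inr (.inr (v, false))
  | .inr e => .inr (.inl e)

theorem coverAssign_injective (S : Finset (Fin N)) :
    Function.Injective (coverAssign (M := M) S) := by
  rintro (⟨v, _ | _⟩ | e) (⟨w, _ | _⟩ | f) h <;> grind [coverAssign]

theorem keyAdj_coverAssign (S : Finset (Fin N)) (k : Fin N × Bool ⊕ Fin M) :
    keyAdj Eend k (coverAssign S k) := by
  rcases k with ⟨v, _ | _⟩ | e <;> grind [keyAdj, coverAssign]

theorem coverAssign_ne_inl {S : Finset (Fin N)} {v : Fin N} (hv : v ∈ S)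
    (k : Fin N × Bool ⊕ Fin M) : coverAssign S k ≠ .inl v := by
  rcases k with ⟨w, _ | _⟩ | e <;> grind [coverAssign]

theorem coverAssign_ne_gadget_true {S : Finset (Fin N)} {v : Fin N} (hv : v ∉ S)
    (k : Fin N × Bool ⊕ Fin M) : coverAssign S k ≠ .inr (.inr (v, true)) := by
  rcases k with ⟨w, _ | _⟩ | e <;> grind [coverAssign]

theorem coverAssign_eq_gadget_false {S : Finset (Fin N)} {v : Fin N} (hv : v ∉ S)
    {k : Fin N × Bool ⊕ Fin M} (hk : coverAssign S k = .inr (.inr (v, false))) :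
    k = .inl (v, true) := by
  rcases k with ⟨w, _ | _⟩ | e <;> grind [coverAssign]

def coverMatching (S : Finset (Fin N)) (t : Fin (2 * N + M)) : Option (Bidder N M) :=
  some (coverAssign S ((keyEquiv N M).symm t))

theorem coverMatching_keyEquiv (S : Finset (Fin N)) (k : Fin N × Bool ⊕ Fin M) :
    coverMatching S (keyEquiv N M k) = some (coverAssign S k) := by
  simp [coverMatching]

theorem isPartialMatching_coverMatching (S : Finset (Fin N)) :
    IsPartialMatching (vcAdj N M Eend) (coverMatching S) := by
  refine ⟨fun t b h => ?_, fun t t' b h h' => ?_⟩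
  · obtain ⟨k, rfl⟩ := (keyEquiv N M).surjective t
    rw [coverMatching_keyEquiv, Option.some_inj] at h
    rw [vcAdj_keyEquiv, ← h]
    exact keyAdj_coverAssign Eend S k
  · rw [coverMatching, Option.some_inj] at h h'
    exact (keyEquiv N M).symm.injective (coverAssign_injective S (h.trans h'.symm))

theorem profitable_coverMatching_of_unassigned {S : Finset (Fin N)} {k : Fin N × Bool ⊕ Fin M}
    {b : Bidder N M} (hb : b ≠ coverAssign S k) (hadj : keyAdj Eend k b)
    (hfree : ∀ k', keyEquiv N M k' ≤ keyEquiv N M k → coverAssign S k' ≠ b) :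
    Profitable (vcAdj N M Eend) (coverMatching S) (keyEquiv N M k) := by
  refine ⟨_, b, coverMatching_keyEquiv S k, hb, (vcAdj_keyEquiv Eend k b).2 hadj,
    fun t ht => ?_⟩
  obtain ⟨k', rfl⟩ := (keyEquiv N M).surjective t
  rw [coverMatching_keyEquiv, ne_eq, Option.some_inj]
  exact hfree k' ht

theorem profitable_coverMatching {S : Finset (Fin N)} (hS : IsVC Eend S)
    (k : Fin N × Bool ⊕ Fin M) (hk : ∀ v ∈ S, k ≠ .inl (v, true)) :
    Profitable (vcAdj N M Eend) (coverMatching S) (keyEquiv N M k) := by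
  rcases k with ⟨v, _ | _⟩ | e
  · by_cases hv : v ∈ S
    · refine profitable_coverMatching_of_unassigned Eend (b := .inl v) ?_ ?_
        fun k' _ => coverAssign_ne_inl hv k' <;> simp [coverAssign, keyAdj, hv]
    · refine profitable_coverMatching_of_unassigned Eend (b := .inr (.inr (v, false))) ?_ ?_
        fun k' hle hk' => ?_
      · simp [coverAssign, hv]
      · simp [keyAdj]
      · rw [coverAssign_eq_gadget_false hv hk', Fin.le_def, keyEquiv_inl_val,
          keyEquiv_inl_val] at hle
        simp at hle
  · have hv : v ∉ S := fun hv => hk v hv rfl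
    exact profitable_coverMatching_of_unassigned Eend (b := .inr (.inr (v, true)))
      (by simp [coverAssign, hv]) (by simp [keyAdj]) fun k' _ => coverAssign_ne_gadget_true hv k'
  · obtain ⟨w, hwS, hw⟩ : ∃ w ∈ S, w = (Eend e).1 ∨ w = (Eend e).2 := by
      rcases hS e with h | h
      exacts [⟨_, h, .inl rfl⟩, ⟨_, h, .inr rfl⟩]
    exact profitable_coverMatching_of_unassigned Eend (b := .inl w) (by simp [coverAssign])
      (by rcases hw with rfl | rfl <;> simp [keyAdj]) fun k' _ => coverAssign_ne_inl hwS k'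

open scoped Classical in
theorem card_filter_not_profitable_coverMatching_le {S : Finset (Fin N)} (hS : IsVC Eend S) :
    #{t | ¬Profitable (vcAdj N M Eend) (coverMatching S) t} ≤ #S := by
  refine (card_le_card fun t ht => ?_).trans
    (card_image_le (f := fun v => keyEquiv N M (.inl (v, true))))
  obtain ⟨k, rfl⟩ := (keyEquiv N M).surjective t
  simp only [mem_filter, mem_univ, true_and] at ht
  by_contra hk
  refine ht (profitable_coverMatching Eend hS k fun v hv hkv => hk ?_)
  exact mem_image.2 ⟨v, hv, by rw [hkv]⟩

theorem le_spmValue_coverMatching_add_card {S : Finset (Fin N)} (hS : IsVC Eend S) :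
    2 * N + M ≤ spmValue (vcAdj N M Eend) (coverMatching S) + #S := by
  have := spmValue_add_card_filter_not_profitable (vcAdj N M Eend) (coverMatching S)
  have := card_filter_not_profitable_coverMatching_le Eend hS
  omega

def keyVertex (t : Fin (2 * N + M)) : Fin N :=
  Sum.elim Prod.fst (fun e => (Eend e).1) ((keyEquiv N M).symm t)

variable {Eend}

theorem gadget_eq_vertex_of_profitable {g : Fin (2 * N + M) → Option (Bidder N M)}
    (hg : IsPartialMatching (vcAdj N M Eend) g) (v : Fin N)
    (hh : Profitable (vcAdj N M Eend) g (keyEquiv N M (.inl (v, false))))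
    (hl : Profitable (vcAdj N M Eend) g (keyEquiv N M (.inl (v, true)))) :
    g (keyEquiv N M (.inl (v, false))) = some (.inl v) := by
  obtain ⟨b, -, hgh, -⟩ := hh
  obtain ⟨c, c', hgl, hne, hadj, hfree⟩ := hl
  have hb := (vcAdj_keyEquiv Eend _ b).1 (hg.1 _ _ hgh)
  have hc := (vcAdj_keyEquiv Eend _ c).1 (hg.1 _ _ hgl)
  rw [vcAdj_keyEquiv] at hadj
  simp only [keyAdj] at hb hc hadj
  rcases hb with rfl | rfl
  · exact hgh
  rcases hc with rfl | rfl
  · simpa using hg.2 _ _ _ hgh hgl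
  have hle : keyEquiv N M (.inl (v, false)) ≤ keyEquiv N M (.inl (v, true)) := by
    simp [Fin.le_def, keyEquiv_inl_val]
  rcases hadj with rfl | rfl
  · exact absurd hgh (hfree _ hle)
  · exact absurd rfl hne

theorem exists_endpoint_not_matched_at_gadget {g : Fin (2 * N + M) → Option (Bidder N M)}
    (hg : IsPartialMatching (vcAdj N M Eend) g) {e : Fin M}
    (he : Profitable (vcAdj N M Eend) g (keyEquiv N M (.inr e))) :
    ∃ w, (w = (Eend e).1 ∨ w = (Eend e).2) ∧
      g (keyEquiv N M (.inl (w, false))) ≠ some (.inl w) := by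
  obtain ⟨b, b', hgb, hne, hadj, hfree⟩ := he
  have hb := (vcAdj_keyEquiv Eend _ b).1 (hg.1 _ _ hgb)
  rw [vcAdj_keyEquiv] at hadj
  simp only [keyAdj] at hb hadj
  have matched_elsewhere (w : Fin N) (hw : b = .inl w) :
      g (keyEquiv N M (.inl (w, false))) ≠ some (.inl w) := fun h =>
    Sum.inl_ne_inr ((keyEquiv N M).injective (hg.2 _ _ _ h (hw ▸ hgb)))
  have hle (w : Fin N) : keyEquiv N M (.inl (w, false)) ≤ keyEquiv N M (.inr e) := by
    simp only [Fin.le_def, keyEquiv_inl_val, keyEquiv_inr_val, Bool.toNat_false]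
    omega
  rcases hb with hb | hb | rfl
  · exact ⟨_, .inl rfl, matched_elsewhere _ hb⟩
  · exact ⟨_, .inr rfl, matched_elsewhere _ hb⟩
  rcases hadj with rfl | rfl | rfl
  · exact ⟨_, .inl rfl, hfree _ (hle _)⟩
  · exact ⟨_, .inr rfl, hfree _ (hle _)⟩
  · exact absurd rfl hne

open scoped Classical in
theorem isVC_image_keyVertex {g : Fin (2 * N + M) → Option (Bidder N M)}
    (hg : IsPartialMatching (vcAdj N M Eend) g) :
    IsVC Eend (image (keyVertex Eend) {t | ¬Profitable (vcAdj N M Eend) g t}) := by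
  intro e
  by_cases he : Profitable (vcAdj N M Eend) g (keyEquiv N M (.inr e))
  · obtain ⟨w, hw, hgw⟩ := exists_endpoint_not_matched_at_gadget hg he
    have hmem : w ∈ image (keyVertex Eend) {t | ¬Profitable (vcAdj N M Eend) g t} := by
      by_cases hh : Profitable (vcAdj N M Eend) g (keyEquiv N M (.inl (w, false)))
      · refine mem_image.2 ⟨keyEquiv N M (.inl (w, true)), ?_, by simp [keyVertex]⟩
        simpa using fun hl => hgw (gadget_eq_vertex_of_profitable hg w hh hl)
      · exact mem_image.2 ⟨_, by simpa using hh, by simp [keyVertex]⟩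
    rcases hw with rfl | rfl
    exacts [.inl hmem, .inr hmem]
  · exact .inl (mem_image.2 ⟨_, by simpa using he, by simp [keyVertex]⟩)

theorem exists_isVC_spmValue_add_card_le {g : Fin (2 * N + M) → Option (Bidder N M)}
    (hg : IsPartialMatching (vcAdj N M Eend) g) :
    ∃ S, IsVC Eend S ∧ spmValue (vcAdj N M Eend) g + #S ≤ 2 * N + M := by
  classical
  refine ⟨_, isVC_image_keyVertex hg, ?_⟩
  have := spmValue_add_card_filter_not_profitable (vcAdj N M Eend) g
  have := card_image_le (s := {t | ¬Profitable (vcAdj N M Eend) g t}) (f := keyVertex Eend)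
  omega

end Reduction

theorem vc_reduction_opt_general (N M : ℕ) (Eend : Fin M → Fin N × Fin N)
    (opt2p optvc : ℕ)
    (h2p : IsGreatest {s | ∃ g, IsPartialMatching (vcAdj N M Eend) g ∧
        spmValue (vcAdj N M Eend) g = s} opt2p)
    (hvc : IsLeast {s | ∃ S : Finset (Fin N), IsVC Eend S ∧ S.card = s} optvc) :
    opt2p + optvc = 2 * N + M := by
  obtain ⟨⟨g, hg, rfl⟩, hmax⟩ := h2p
  obtain ⟨⟨S, hS, rfl⟩, hmin⟩ := hvc
  apply le_antisymm
  · obtain ⟨T, hT, hgT⟩ := exists_isVC_spmValue_add_card_le hg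
    have := hmin ⟨T, hT, rfl⟩
    omega
  · have := hmax ⟨_, isPartialMatching_coverMatching Eend S, rfl⟩
    have := le_spmValue_coverMatching_add_card Eend hS
    omega

/-- in the reduction from Vertex Cover to Second-Price Matching,
`OPT_2P(f(G)) = 2|V(G)| + |E(G)| − OPT_VC(G)`. -/
theorem vc_reduction_opt (N M : ℕ) (Eend : Fin M → Fin N × Fin N)
    (hsimple : ∀ e, (Eend e).1 ≠ (Eend e).2)
    (opt2p optvc : ℕ)
    (h2p : IsGreatest {s | ∃ g, IsPartialMatching (vcAdj N M Eend) g ∧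
        spmValue (vcAdj N M Eend) g = s} opt2p)
    (hvc : IsLeast {s | ∃ S : Finset (Fin N), IsVC Eend S ∧ S.card = s} optvc) :
    opt2p + optvc = 2 * N + M :=
  vc_reduction_opt_general N M Eend opt2p optvc h2p hvc
end
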